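/- arXiv:1908.09580 — 16 statements merged into one kernel-verified Lean document; each statement's English description precedes it below -/
import Mathlib

section
/- For all real numbers r and c with r > c > 0, there exists a unique β in the open interval (0,1) satisfying β · log(β·r/c) = 1 − β (equivalently, log(β·r/c) = (1−β)/β); moreover this β satisfies β > c/r. -/
/-- For all real numbers `r` and `c` with `r > c > 0`, there exists a unique `β ∈ (0,1)`
satisfying `β * log (β * r / c) = 1 - β`; moreover this `β` satisfies `β > c / r`. -/
theorem stmt_0 (r c : ℝ) (hc : 0 < c) (hrc : c < r) :
    (∃! β : ℝ, β ∈ Set.Ioo (0 : ℝ) 1 ∧ β * Real.log (β * r / c) = 1 - β) ∧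
    (∀ β : ℝ, β ∈ Set.Ioo (0 : ℝ) 1 → β * Real.log (β * r / c) = 1 - β → c / r < β) := by
  have hr : 0 < r := hc.trans hrc
  set K : ℝ := Real.log (r / c) with hK
  have hK0 : 0 < K := Real.log_pos (by rw [lt_div_iff₀ hc]; linarith)
  set g : ℝ → ℝ := fun β => Real.log β + K + 1 - 1 / β with hg
  -- log rewrite
  have hlog : ∀ β : ℝ, 0 < β → Real.log (β * r / c) = Real.log β + K := by
    intro β hβ
    rw [hK, mul_div_assoc, Real.log_mul hβ.ne' (by positivity)]
  -- equation equivalence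
  have hequiv : ∀ β : ℝ, 0 < β →
      (β * Real.log (β * r / c) = 1 - β ↔ g β = 0) := by
    intro β hβ
    rw [hlog β hβ]
    constructor
    · intro h
      have hβg : β * g β = 0 := by
        simp only [hg]
        field_simp
        nlinarith [h]
      rcases mul_eq_zero.1 hβg with h' | h'
      · exact absurd h' hβ.ne'
      · exact h'
    · intro h
      have : β * g β = 0 := by rw [h]; ring
      simp only [hg] at this
      field_simp at this
      nlinarith [this]
  -- strict monotonicity
  have hmono : StrictMonoOn g (Set.Ioi (0 : ℝ)) := by
    intro x hx y hy hxy
    have h1 : Real.log x < Real.log y := Real.log_lt_log hx hxy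
    have h2 : 1 / y < 1 / x := one_div_lt_one_div_of_lt hx hxy
    simp only [hg]
    linarith
  -- continuity
  have hcont : ∀ s : Set ℝ, s ⊆ Set.Ioi (0 : ℝ) → ContinuousOn g s := by
    intro s hs
    intro x hx
    have hx0 : x ≠ 0 := ne_of_gt (hs hx)
    exact (((Real.continuousAt_log hx0).add continuousAt_const).add continuousAt_const
      |>.sub (continuousAt_const.div continuousAt_id hx0)).continuousWithinAt
  -- endpoints
  set ε : ℝ := min (1 / 2) (1 / (2 * (K + 1))) with hε
  have hε0 : 0 < ε := lt_min (by norm_num) (by positivity)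
  have hε1 : ε < 1 := lt_of_le_of_lt (min_le_left _ _) (by norm_num)
  have hεle : ε ≤ 1 / (2 * (K + 1)) := min_le_right _ _
  have hεinv : 2 * (K + 1) ≤ 1 / ε := by
    rw [le_div_iff₀ hε0]
    calc 2 * (K + 1) * ε ≤ 2 * (K + 1) * (1 / (2 * (K + 1))) := by
          apply mul_le_mul_of_nonneg_left hεle (by positivity)
      _ = 1 := by field_simp
  have hgε : g ε < 0 := by
    have hlogε : Real.log ε < 0 := Real.log_neg hε0 hε1
    simp only [hg]
    linarith
  have hg1 : g 1 = K := by simp [hg]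
  have hg1pos : (0 : ℝ) < g 1 := by rw [hg1]; exact hK0
  -- IVT
  have hivt := intermediate_value_Ioo hε1.le
    (hcont (Set.Icc ε 1) (fun x hx => lt_of_lt_of_le hε0 hx.1))
  have h0mem : (0 : ℝ) ∈ Set.Ioo (g ε) (g 1) := ⟨hgε, hg1pos⟩
  obtain ⟨β, hβmem, hβeq⟩ := hivt h0mem
  have hβpos : 0 < β := hε0.trans hβmem.1
  have hβIoo : β ∈ Set.Ioo (0 : ℝ) 1 := ⟨hβpos, hβmem.2⟩
  constructor
  · refine ⟨β, ⟨hβIoo, (hequiv β hβpos).2 hβeq⟩, ?_⟩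
    intro y ⟨hyIoo, hyeq⟩
    have hy0 : g y = 0 := (hequiv y hyIoo.1).1 hyeq
    exact hmono.injOn hyIoo.1 hβpos (by rw [hy0, hβeq])
  · intro β' hβ'Ioo hβ'eq
    have hβ'0 : g β' = 0 := (hequiv β' hβ'Ioo.1).1 hβ'eq
    have hcr : (0 : ℝ) < c / r := by positivity
    have hgcr : g (c / r) < 0 := by
      have : Real.log (c / r) = -K := by
        rw [hK, Real.log_div hc.ne' hr.ne', Real.log_div hr.ne' hc.ne']; ring
      have hrc1 : 1 < r / c := by rw [lt_div_iff₀ hc]; linarith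
      have : g (c / r) = 1 - r / c := by
        simp only [hg, this, one_div_div]; ring
      linarith [this, hrc1]
    by_contra h
    push_neg at h
    rcases eq_or_lt_of_le h with h' | h'
    · rw [← h'] at hgcr; linarith [hβ'0, hgcr]
    · have h2 := hmono hβ'Ioo.1 hcr h'
      rw [hβ'0] at h2
      linarith
end

section
/- Let r > c > 0 and define f : [0,1] → ℝ by f(β) = (1−β)·r·log(max(β·r/c, 1)). Then the unique β^NN ∈ (0,1) satisfying β^NN · log(β^NN·r/c) = 1 − β^NN is the unique maximizer of f over [0,1]. -/
/-- For `r > c > 0`, the unique `β^NN ∈ (0,1)` satisfying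
`β^NN * log (β^NN * r / c) = 1 - β^NN` is the unique maximizer over `[0,1]` of
`f β = (1 - β) * r * log (max (β * r / c) 1)`. -/
theorem stmt_1 (r c : ℝ) (hc : 0 < c) (hrc : c < r) (βNN : ℝ)
    (hmem : βNN ∈ Set.Ioo (0 : ℝ) 1)
    (heq : βNN * Real.log (βNN * r / c) = 1 - βNN) :
    ∀ β ∈ Set.Icc (0 : ℝ) 1, β ≠ βNN →
      (1 - β) * r * Real.log (max (β * r / c) 1) <
      (1 - βNN) * r * Real.log (max (βNN * r / c) 1) := by
  obtain ⟨hβ0, hβ1⟩ := hmem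
  have hr : 0 < r := hc.trans hrc
  set L := Real.log (βNN * r / c) with hL
  have hLpos : 0 < L := by
    by_contra h
    push_neg at h
    nlinarith [mul_nonpos_of_nonneg_of_nonpos hβ0.le h]
  have hargpos : 0 < βNN * r / c := by positivity
  have harg1 : 1 < βNN * r / c := (Real.log_pos_iff hargpos.le).mp hLpos
  have hmaxNN : max (βNN * r / c) 1 = βNN * r / c := max_eq_left harg1.le
  have hRHS : (1 - βNN) * r * Real.log (max (βNN * r / c) 1) = (1 - βNN) * r * L := by
    rw [hmaxNN]
  have hRHSpos : 0 < (1 - βNN) * r * L := by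
    apply mul_pos (mul_pos (by linarith) hr) hLpos
  intro β hβ hne
  obtain ⟨hb0, hb1⟩ := hβ
  rw [hRHS]
  rcases le_or_gt (β * r / c) 1 with hcase | hcase
  · rw [max_eq_right hcase, Real.log_one, mul_zero]
    exact hRHSpos
  · rw [max_eq_left hcase.le]
    have hbpos : 0 < β := by
      by_contra h
      push_neg at h
      have : β * r / c ≤ 0 := by
        apply div_nonpos_of_nonpos_of_nonneg _ hc.le
        exact mul_nonpos_of_nonpos_of_nonneg h hr.le
      linarith
    rcases eq_or_lt_of_le hb1 with rfl | hb1'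
    · simpa using hRHSpos
    · -- key: log(β r/c) = L + log(β/βNN) < L + β/βNN - 1
      have hsplit : Real.log (β * r / c) = L + Real.log (β / βNN) := by
        rw [hL, ← Real.log_mul (by positivity) (by positivity)]
        congr 1
        field_simp
      have hlogbound : Real.log (β / βNN) < β / βNN - 1 := by
        apply Real.log_lt_sub_one_of_pos (by positivity)
        intro h
        apply hne
        field_simp at h
        linarith
      have hstep : (1 - β) * r * Real.log (β * r / c)
          < (1 - β) * r * (L + (β / βNN - 1)) := by
        apply mul_lt_mul_of_pos_left _ (mul_pos (by linarith) hr)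
        rw [hsplit]; linarith
      refine hstep.trans_le ?_
      have hβNNne : βNN ≠ 0 := ne_of_gt hβ0
      have hdiv : β / βNN * βNN = β := div_mul_cancel₀ β hβNNne
      have h1 : L + (β / βNN - 1) = (1 + β - 2 * βNN) / βNN := by
        rw [eq_div_iff hβNNne]
        linear_combination heq + hdiv
      rw [h1, show (1-β)*r*((1+β-2*βNN)/βNN) = (1-β)*r*(1+β-2*βNN)/βNN by ring, div_le_iff₀ hβ0]
      nlinarith [mul_nonneg hr.le (sq_nonneg (β - βNN)), heq]
end

section
/- Let r > c > 0 and let β^NN be the unique β ∈ (0,1) with β·log(β·r/c) = 1 − β. Then: (i) the equilibrium effort a^NN = β^NN·r/c − 1 is strictly positive; (ii) the equilibrium surplus of each CP satisfies (1−β^NN)·r·log(a^NN + 1) = (1−β^NN)²·r/β^NN > 0; and (iii) r + c − 2·β^NN·r > 0, so that the ISP equilibrium surplus n·r + n·c − 2·n·β^NN·r is strictly positive for every positive integer n. -/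
/-- Properties of the non-neutral symmetric equilibrium: positive effort, CP surplus
identity and positivity, and positivity of the ISP surplus for every number of CPs. -/
theorem stmt_2 (r c : ℝ) (hc : 0 < c) (hrc : c < r) (βNN : ℝ)
    (hmem : βNN ∈ Set.Ioo (0 : ℝ) 1)
    (heq : βNN * Real.log (βNN * r / c) = 1 - βNN) :
    0 < βNN * r / c - 1 ∧
    ((1 - βNN) * r * Real.log ((βNN * r / c - 1) + 1) = (1 - βNN) ^ 2 * r / βNN ∧
      0 < (1 - βNN) ^ 2 * r / βNN) ∧
    (0 < r + c - 2 * βNN * r ∧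
      ∀ n : ℕ, 0 < n → 0 < (n : ℝ) * r + (n : ℝ) * c - 2 * (n : ℝ) * βNN * r) := by
  obtain ⟨hb0, hb1⟩ := hmem
  have h1b : 0 < 1 - βNN := by linarith
  have hr : 0 < r := lt_trans hc hrc
  have hx0 : 0 < βNN * r / c := by positivity
  have hlogpos : 0 < Real.log (βNN * r / c) := by
    nlinarith [heq]
  have hx1 : 1 < βNN * r / c := by
    by_contra h
    push_neg at h
    have := Real.log_nonpos (le_of_lt hx0) h
    linarith
  have hlog : Real.log (βNN * r / c) = (1 - βNN) / βNN := by
    field_simp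
    linarith [heq]
  have hkey : 0 < r + c - 2 * βNN * r := by
    by_contra h
    push_neg at h
    have hβge : (r + c) / (2 * r) ≤ βNN := by
      rw [div_le_iff₀ (by positivity)]
      linarith
    have hxge : (r + c) / (2 * c) ≤ βNN * r / c := by
      rw [div_le_div_iff₀ (by positivity) hc]
      nlinarith
    have hne : (r + c) / (2 * c) ≠ 1 := by
      intro h'
      rw [div_eq_one_iff_eq (by positivity)] at h'
      linarith
    have hlb : Real.log ((r + c) / (2 * c)) > 1 - (2 * c) / (r + c) := by
      have h1 : Real.log (((r + c) / (2 * c))⁻¹) < ((r + c) / (2 * c))⁻¹ - 1 :=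
        Real.log_lt_sub_one_of_pos (by positivity) (by
          simp only [ne_eq, inv_eq_one]; exact hne)
      rw [Real.log_inv] at h1
      have : ((r + c) / (2 * c))⁻¹ = (2 * c) / (r + c) := by
        rw [inv_div]
      rw [this] at h1
      linarith
    have hmono : Real.log ((r + c) / (2 * c)) ≤ Real.log (βNN * r / c) :=
      Real.log_le_log (by positivity) hxge
    have hub : Real.log (βNN * r / c) ≤ (r - c) / (r + c) := by
      rw [hlog, div_le_div_iff₀ hb0 (by linarith)]
      nlinarith
    have : 1 - (2 * c) / (r + c) = (r - c) / (r + c) := by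
      field_simp
      ring
    linarith
  refine ⟨by linarith, ⟨?_, by positivity⟩, hkey, ?_⟩
  · rw [sub_add_cancel, hlog]
    field_simp
  · intro n hn
    have hnp : (0 : ℝ) < (n : ℝ) := by exact_mod_cast hn
    nlinarith [hkey]
end

section
/- For every integer n ≥ 1 and all reals r > c > 0, there exists a unique β in (0,1) satisfying n·β·log(β·r/c) = 1 − β; moreover this β satisfies β > c/r. -/
/-- For every integer `n ≥ 1` and reals `r > c > 0`, there is a unique `β ∈ (0,1)` with
`n * β * log (β * r / c) = 1 - β`; moreover this `β` satisfies `β > c / r`. -/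
theorem stmt_3 (n : ℕ) (hn : 1 ≤ n) (r c : ℝ) (hc : 0 < c) (hrc : c < r) :
    (∃! β : ℝ, β ∈ Set.Ioo (0 : ℝ) 1 ∧ (n : ℝ) * β * Real.log (β * r / c) = 1 - β) ∧
    (∀ β : ℝ, β ∈ Set.Ioo (0 : ℝ) 1 → (n : ℝ) * β * Real.log (β * r / c) = 1 - β →
      c / r < β) := by
  have hr : 0 < r := hc.trans hrc
  have hn1 : (1 : ℝ) ≤ (n : ℝ) := by exact_mod_cast hn
  have hdc : 0 < c / r := div_pos hc hr
  have hcr1 : c / r < 1 := (div_lt_one hr).mpr hrc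
  -- any solution in (0,1) satisfies β > c/r
  have hlow : ∀ β : ℝ, β ∈ Set.Ioo (0 : ℝ) 1 →
      (n : ℝ) * β * Real.log (β * r / c) = 1 - β → c / r < β := by
    intro β hβ heq
    by_contra h
    push_neg at h
    have hβ0 : 0 < β := hβ.1
    have h1 : β * r / c ≤ 1 := by
      rw [div_le_one hc]
      calc β * r ≤ (c / r) * r := by nlinarith
        _ = c := by field_simp
    have hlog : Real.log (β * r / c) ≤ 0 := Real.log_nonpos (by positivity) h1
    have : (n : ℝ) * β * Real.log (β * r / c) ≤ 0 :=
      mul_nonpos_of_nonneg_of_nonpos (by positivity) hlog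
    have : (0 : ℝ) < 1 - β := by linarith [hβ.2]
    linarith
  -- strict monotonicity of g β = n β log(βr/c) + β on [c/r, ∞)
  have mono : ∀ a b : ℝ, c / r ≤ a → a < b →
      (n : ℝ) * a * Real.log (a * r / c) + a < (n : ℝ) * b * Real.log (b * r / c) + b := by
    intro a b ha hab
    have ha0 : 0 < a := hdc.trans_le ha
    have hb0 : 0 < b := ha0.trans hab
    have h1a : 1 ≤ a * r / c := by
      rw [le_div_iff₀ hc]
      calc 1 * c = c := one_mul c
        _ = (c / r) * r := by field_simp
        _ ≤ a * r := by nlinarith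
    have h1b : 1 ≤ b * r / c := le_trans h1a (by gcongr)
    have hloga : 0 ≤ Real.log (a * r / c) := Real.log_nonneg h1a
    have hlogb : 0 ≤ Real.log (b * r / c) := Real.log_nonneg h1b
    have hlogab : Real.log (a * r / c) ≤ Real.log (b * r / c) := by
      apply Real.log_le_log (by positivity)
      gcongr
    have h1 : (n : ℝ) * a * Real.log (a * r / c) ≤ (n : ℝ) * a * Real.log (b * r / c) :=
      mul_le_mul_of_nonneg_left hlogab (by positivity)
    have h2 : (n : ℝ) * a * Real.log (b * r / c) ≤ (n : ℝ) * b * Real.log (b * r / c) :=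
      mul_le_mul_of_nonneg_right (by nlinarith) hlogb
    linarith
  -- existence via IVT on [c/r, 1]
  have hcont : ContinuousOn (fun β : ℝ => (n : ℝ) * β * Real.log (β * r / c) + β - 1)
      (Set.Icc (c / r) 1) := by
    apply ContinuousOn.sub _ continuousOn_const
    apply ContinuousOn.add _ continuousOn_id
    apply ContinuousOn.mul (continuousOn_const.mul continuousOn_id)
    apply ContinuousOn.log ((continuousOn_id.mul continuousOn_const).div_const c)
    intro x hx
    have hx0 : 0 < x := hdc.trans_le hx.1
    have : 0 < x * r / c := by positivity
    positivity
  have hfa : (fun β : ℝ => (n : ℝ) * β * Real.log (β * r / c) + β - 1) (c / r)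
      = c / r - 1 := by
    have : (c / r) * r / c = 1 := by field_simp
    simp [this]
  have hfb : (fun β : ℝ => (n : ℝ) * β * Real.log (β * r / c) + β - 1) 1
      = (n : ℝ) * Real.log (r / c) := by
    simp
  have hivt := intermediate_value_Icc hcr1.le hcont
  have h0mem : (0 : ℝ) ∈ Set.Icc
      ((fun β : ℝ => (n : ℝ) * β * Real.log (β * r / c) + β - 1) (c / r))
      ((fun β : ℝ => (n : ℝ) * β * Real.log (β * r / c) + β - 1) 1) := by
    rw [hfa, hfb]
    constructor
    · linarith
    · have : 0 < Real.log (r / c) := Real.log_pos ((one_lt_div hc).mpr hrc)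
      positivity
  obtain ⟨β, hβmem, hβ0⟩ := hivt h0mem
  simp only at hβ0
  have hβeq : (n : ℝ) * β * Real.log (β * r / c) = 1 - β := by linarith
  have hβne1 : β < 1 := by
    rcases lt_or_eq_of_le hβmem.2 with h | h
    · exact h
    · exfalso
      rw [h] at hβ0
      have : 0 < Real.log (r / c) := Real.log_pos ((one_lt_div hc).mpr hrc)
      rw [one_mul, mul_one] at hβ0
      nlinarith
  have hβgt : c / r < β := by
    rcases lt_or_eq_of_le hβmem.1 with h | h
    · exact h
    · exfalso
      rw [← h] at hβ0
      have : (c / r) * r / c = 1 := by field_simp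
      rw [this] at hβ0
      simp at hβ0
      linarith
  have hβIoo : β ∈ Set.Ioo (0 : ℝ) 1 := ⟨hdc.trans hβgt, hβne1⟩
  refine ⟨⟨β, ⟨hβIoo, hβeq⟩, ?_⟩, hlow⟩
  intro y ⟨hyIoo, hyeq⟩
  have hygt : c / r < y := hlow y hyIoo hyeq
  rcases lt_trichotomy y β with h | h | h
  · exfalso
    have := mono y β hygt.le h
    rw [hyeq, hβeq] at this
    linarith
  · exact h
  · exfalso
    have := mono β y hβgt.le h
    rw [hyeq, hβeq] at this
    linarith
end

section
/- Consider the neutral game with n ≥ 2 CPs, revenue rate r and cost c with r > n·c > 0. Then the game has a unique Nash equilibrium, namely the symmetric profile in which every coordinate equals the unique β^N ∈ (0,1) satisfying n·β^N·log(β^N·r/c) = 1 − β^N. -/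
/-- A profile `β ∈ [0,1]^n` is a Nash equilibrium of the neutral game with `n` CPs,
revenue rate `r` and cost `c`. -/
def IsNashNeutral (n : ℕ) (r c : ℝ) (β : Fin n → ℝ) : Prop :=
  (∀ i, β i ∈ Set.Icc (0 : ℝ) 1) ∧
  ∀ i : Fin n, ∀ b ∈ Set.Icc (0 : ℝ) 1,
    (1 - b) * r * Real.log (max ((∑ j, Function.update β i b j * r) / (n * c)) 1) ≤
    (1 - β i) * r * Real.log (max ((∑ j, β j * r) / (n * c)) 1)


lemma log_tangent_le {x x0 : ℝ} (hx : 0 < x) (hx0 : 0 < x0) :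
    Real.log x ≤ Real.log x0 + (x - x0)/x0 := by
  have h := Real.log_le_sub_one_of_pos (show 0 < x/x0 by positivity)
  rw [Real.log_div (ne_of_gt hx) (ne_of_gt hx0)] at h
  have h2 : x/x0 - 1 = (x - x0)/x0 := by field_simp
  linarith [h2 ▸ h]

lemma log_tangent_ge {x x0 : ℝ} (hx : 0 < x) (hx0 : 0 < x0) :
    Real.log x0 + (x - x0)/x ≤ Real.log x := by
  have h := log_tangent_le hx0 hx
  have h2 : (x0 - x)/x = -((x - x0)/x) := by ring
  rw [h2] at h
  linarith

lemma aux_limit_up (L S β : ℝ) (hL : 0 < L) (hβ : β < 1)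
    (h : ∀ t : ℝ, 0 < t → t ≤ 1 - β → 1 - β - t ≤ L * (S + t)) : 1 - β ≤ L * S := by
  by_contra h'
  push_neg at h'
  set ε := 1 - β - L * S with hε
  have hεpos : 0 < ε := by simp [hε]; linarith
  set t := min (1 - β) (ε / (2 * (L + 1))) with ht
  have ht1 : 0 < t := lt_min (by linarith) (by positivity)
  have ht2 : t ≤ 1 - β := min_le_left _ _
  have ht3 : t * (2 * (L + 1)) ≤ ε := (le_div_iff₀ (by positivity)).1 (min_le_right _ _)
  have := h t ht1 ht2
  nlinarith

lemma aux_limit_down (L S β : ℝ) (hL : 0 < L) (hS : 0 < S) (hβ : 0 < β)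
    (h : ∀ t : ℝ, 0 < t → t ≤ min β (S/2) → L * (S - t) ≤ 1 - β + t) : L * S ≤ 1 - β := by
  by_contra h'
  push_neg at h'
  set ε := L * S - (1 - β) with hε
  have hεpos : 0 < ε := by simp [hε]; linarith
  set t := min (min β (S/2)) (ε / (2 * (L + 1))) with ht
  have ht1 : 0 < t := lt_min (lt_min hβ (by positivity)) (by positivity)
  have ht2 : t ≤ min β (S/2) := min_le_left _ _
  have ht3 : t * (2 * (L + 1)) ≤ ε := (le_div_iff₀ (by positivity)).1 (min_le_right _ _)
  have := h t ht1 ht2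
  nlinarith

lemma eq_unique (n r c a b : ℝ) (hn : 0 < n) (hc : 0 < c) (hr : 0 < r)
    (ha : a ∈ Set.Ioo (0:ℝ) 1) (hb : b ∈ Set.Ioo (0:ℝ) 1)
    (hea : n * a * Real.log (a*r/c) = 1 - a) (heb : n * b * Real.log (b*r/c) = 1 - b) :
    a = b := by
  obtain ⟨ha1, ha2⟩ := ha
  obtain ⟨hb1, hb2⟩ := hb
  have hla : 0 < Real.log (a*r/c) := by nlinarith [mul_pos hn ha1]
  have hlb : 0 < Real.log (b*r/c) := by nlinarith [mul_pos hn hb1]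
  have key : ∀ x y : ℝ, 0 < x → x < y → y < 1 →
      0 < Real.log (x*r/c) → n * x * Real.log (x*r/c) < n * y * Real.log (y*r/c) := by
    intro x y hx hxy hy1 hlx
    have hlog : Real.log (x*r/c) < Real.log (y*r/c) := by
      apply Real.log_lt_log (by positivity)
      gcongr
    have h1 : n * x * Real.log (x*r/c) < n * y * Real.log (x*r/c) := by
      have : n * x < n * y := by nlinarith
      exact mul_lt_mul_of_pos_right this hlx
    have h2 : n * y * Real.log (x*r/c) < n * y * Real.log (y*r/c) :=
      mul_lt_mul_of_pos_left hlog (mul_pos hn (lt_trans hx hxy))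
    linarith
  rcases lt_trichotomy a b with h | h | h
  · have := key a b ha1 h hb2 hla; exfalso; linarith
  · exact h
  · have := key b a hb1 h ha2 hlb; exfalso; linarith

lemma sum_update_mul (n : ℕ) (β : Fin n → ℝ) (i : Fin n) (b r : ℝ) :
    ∑ j, Function.update β i b j * r = (∑ j, β j * r) - β i * r + b * r := by
  have h : ∀ j, Function.update β i b j * r
      = β j * r + (if j = i then b * r - β i * r else 0) := by
    intro j
    rw [Function.update_apply]
    split_ifs with hji
    · subst hji; ring
    · ring
  simp only [h, Finset.sum_add_distrib, Finset.sum_ite_eq' Finset.univ i, Finset.mem_univ,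
    if_true]
  ring




lemma symm_is_nash (n : ℕ) (hn : 2 ≤ n) (r c : ℝ) (hc : 0 < c) (hrn : n * c < r)
    (βN : ℝ) (hmem : βN ∈ Set.Ioo (0 : ℝ) 1)
    (heq : (n : ℝ) * βN * Real.log (βN * r / c) = 1 - βN) :
    IsNashNeutral n r c (fun _ => βN) := by
  obtain ⟨hb0, hb1⟩ := hmem
  have hn2 : (2:ℝ) ≤ (n:ℝ) := by exact_mod_cast hn
  have hnc : 0 < (n:ℝ) * c := by positivity
  have hr : 0 < r := hnc.trans hrn
  set LN := Real.log (βN * r / c) with hLNdef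
  have hNB : 0 < (n:ℝ) * βN := by positivity
  have hLN : 0 < LN := by nlinarith
  have hx0 : 1 < βN * r / c := by
    by_contra h
    push_neg at h
    have := Real.log_nonpos (by positivity) h
    rw [← hLNdef] at this
    linarith
  have hsumc : (∑ _j : Fin n, βN * r) = (n:ℝ) * (βN * r) := by
    rw [Finset.sum_const, Finset.card_univ, Fintype.card_fin, nsmul_eq_mul]
  have hdiv : ((n:ℝ) * (βN * r)) / ((n:ℝ) * c) = βN * r / c := by
    rw [mul_div_mul_left _ _ (by positivity)]
  constructor
  · intro i; exact ⟨le_of_lt hb0, le_of_lt hb1⟩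
  · intro i b hb
    obtain ⟨hb0', hb1'⟩ := hb
    have hRHS : (1 - (fun _ : Fin n => βN) i) * r *
        Real.log (max ((∑ j, (fun _ : Fin n => βN) j * r) / (n * c)) 1)
        = (1 - βN) * r * LN := by
      simp only
      rw [hsumc, hdiv, max_eq_left (le_of_lt hx0), hLNdef]
    rw [hRHS]
    have hsum2 : (∑ j, Function.update (fun _ : Fin n => βN) i b j * r)
        = (n:ℝ) * (βN * r) - βN * r + b * r := by
      rw [sum_update_mul n (fun _ => βN) i b r]
      simp only [Finset.sum_const, Finset.card_univ, Fintype.card_fin, nsmul_eq_mul]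
    rw [hsum2]
    set X := ((n:ℝ) * (βN * r) - βN * r + b * r) / ((n:ℝ) * c) with hXdef
    by_cases hX : X ≤ 1
    · rw [max_eq_right hX, Real.log_one, mul_zero]
      have : 0 < (1 - βN) * r * LN := mul_pos (mul_pos (by linarith) hr) hLN
      linarith
    · push_neg at hX
      rw [max_eq_left (le_of_lt hX)]
      set q := (b - βN) / ((n:ℝ) * βN) with hqdef
      have hq2 : q * ((n:ℝ) * βN) = b - βN := by
        rw [hqdef]; field_simp
      have htan : Real.log X ≤ LN + q := by
        have h1 := log_tangent_le (lt_trans one_pos hX) (lt_trans one_pos hx0)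
        have h2 : (X - βN * r / c) / (βN * r / c) = q := by
          rw [hXdef, hqdef]
          field_simp
          ring
        rw [h2, ← hLNdef] at h1
        exact h1
      have h5 : (1-b)*(LN+q)*((n:ℝ)*βN) - (1-βN)*LN*((n:ℝ)*βN) = -((βN-b)^2) := by
        linear_combination ((1-b) - (1-βN)) * heq + (1-b) * hq2
      have key : (1-b)*(LN+q) ≤ (1-βN)*LN := by
        have h6 : (1-b)*(LN+q)*((n:ℝ)*βN) ≤ (1-βN)*LN*((n:ℝ)*βN) := by
          nlinarith [sq_nonneg (βN-b)]
        exact le_of_mul_le_mul_right h6 hNB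
      calc (1-b)*r*Real.log X ≤ (1-b)*r*(LN+q) := by
            apply mul_le_mul_of_nonneg_left htan (mul_nonneg (by linarith) hr.le)
      _ = r * ((1-b)*(LN+q)) := by ring
      _ ≤ r * ((1-βN)*LN) := by apply mul_le_mul_of_nonneg_left key (le_of_lt hr)
      _ = (1-βN)*r*LN := by ring




set_option maxHeartbeats 1000000 in
lemma nash_eq_symm (n : ℕ) (hn : 2 ≤ n) (r c : ℝ) (hc : 0 < c) (hrn : n * c < r)
    (βN : ℝ) (hmem : βN ∈ Set.Ioo (0 : ℝ) 1)
    (heq : (n : ℝ) * βN * Real.log (βN * r / c) = 1 - βN)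
    (β : Fin n → ℝ) (hnash : IsNashNeutral n r c β) : β = (fun _ => βN) := by
  obtain ⟨hm, hopt⟩ := hnash
  have hn2 : (2:ℝ) ≤ (n:ℝ) := by exact_mod_cast hn
  have hnc : 0 < (n:ℝ) * c := by positivity
  have hr : 0 < r := hnc.trans hrn
  have hβ0 : ∀ i, 0 ≤ β i := fun i => (hm i).1
  have hβ1 : ∀ i, β i ≤ 1 := fun i => (hm i).2
  set S := ∑ j, β j with hSdef
  have hsum : ∑ j, β j * r = S * r := (Finset.sum_mul ..).symm
  have hS_ge : ∀ i, β i ≤ S := fun i =>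
    Finset.single_le_sum (f := β) (fun j _ => hβ0 j) (Finset.mem_univ i)
  have hS0 : 0 ≤ S := Finset.sum_nonneg (fun j _ => hβ0 j)
  -- every player's equilibrium payoff is positive
  have hpos : ∀ i, 0 < (1 - β i) * r * Real.log (max ((S * r) / ((n:ℝ) * c)) 1) := by
    intro i
    set s := S - β i with hsdef
    have hs0 : 0 ≤ s := by have := hS_ge i; simp [hsdef]; linarith
    set m := max ((n:ℝ)*c/r - s) 0 with hmdef
    set b0 := (m + 1)/2 with hb0def
    have hncr : (n:ℝ)*c/r < 1 := (div_lt_one hr).2 hrn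
    have hm0 : 0 ≤ m := le_max_right _ _
    have hm1 : m < 1 := max_lt (by linarith) one_pos
    have hb00 : 0 ≤ b0 := by simp [hb0def]; linarith
    have hb01 : b0 < 1 := by simp [hb0def]; linarith
    have hbgt : (n:ℝ)*c/r - s < b0 := by
      have h1 : (n:ℝ)*c/r - s ≤ m := le_max_left _ _
      have h2 : m < b0 := by simp [hb0def]; linarith
      linarith
    have h0 : 0 < (1 - b0) * r *
        Real.log (max ((∑ j, Function.update β i b0 j * r) / ((n:ℝ) * c)) 1) := by
      rw [sum_update_mul, hsum]
      have hX1 : 1 < (S*r - β i*r + b0*r)/((n:ℝ)*c) := by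
        rw [lt_div_iff₀ hnc]
        have h7 : (n:ℝ)*c/r < s + b0 := by linarith
        have h8 : ((n:ℝ)*c/r)*r < (s + b0)*r := mul_lt_mul_of_pos_right h7 hr
        have h9 : ((n:ℝ)*c/r)*r = (n:ℝ)*c := by field_simp
        have h10 : (s + b0)*r = S*r - β i*r + b0*r := by rw [hsdef]; ring
        linarith
      rw [max_eq_left (le_of_lt hX1)]
      exact mul_pos (mul_pos (by linarith) hr) (Real.log_pos hX1)
    calc (0:ℝ) < _ := h0
    _ ≤ _ := by
        have := hopt i b0 ⟨hb00, le_of_lt hb01⟩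
        rw [hsum] at this
        exact this
  -- the aggregate exceeds the threshold
  have hlogpos : 0 < Real.log (max ((S * r) / ((n:ℝ) * c)) 1) := by
    have h1 := hpos ⟨0, by omega⟩
    by_contra h
    push_neg at h
    nlinarith [mul_nonneg (mul_nonneg (sub_nonneg.2 (hβ1 ⟨0, by omega⟩)) hr.le) (neg_nonneg.2 h)]
  have hSgt : 1 < S*r/((n:ℝ)*c) := by
    by_contra h
    push_neg at h
    rw [max_eq_right h, Real.log_one] at hlogpos
    exact lt_irrefl 0 hlogpos
  have hmaxeq : max (S*r/((n:ℝ)*c)) 1 = S*r/((n:ℝ)*c) := max_eq_left hSgt.le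
  set L := Real.log (S*r/((n:ℝ)*c)) with hLdef
  have hL : 0 < L := Real.log_pos hSgt
  have hSpos : 0 < S := by
    rw [lt_div_iff₀ hnc] at hSgt
    nlinarith
  have hpos' : ∀ i, 0 < (1 - β i) * r * L := by
    intro i
    have := hpos i
    rw [hmaxeq, ← hLdef] at this
    exact this
  have hβlt1 : ∀ i, β i < 1 := by
    intro i
    by_contra h
    push_neg at h
    nlinarith [hpos' i, mul_pos hr hL]
  -- FOC upper: for every i, 1 - β i ≤ L S
  have hup : ∀ i, 1 - β i ≤ L * S := by
    intro i
    apply aux_limit_up L S (β i) hL (hβlt1 i)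
    intro t ht htle
    have hN := hopt i (β i + t) ⟨by linarith [hβ0 i], by linarith⟩
    rw [sum_update_mul, hsum, hmaxeq] at hN
    have hexp : S*r - β i*r + (β i + t)*r = (S+t)*r := by ring
    rw [hexp] at hN
    have hSt : 0 < S + t := by linarith
    have hXgt : 1 < (S+t)*r/((n:ℝ)*c) := by
      have h1 : S*r < (S+t)*r := by nlinarith
      have h2 : S*r/((n:ℝ)*c) < (S+t)*r/((n:ℝ)*c) := (div_lt_div_iff_of_pos_right hnc).2 h1
      linarith
    rw [max_eq_left hXgt.le] at hN
    set q := t/(S+t) with hqdef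
    have hq2 : q*(S+t) = t := by rw [hqdef]; field_simp
    have hq0 : 0 ≤ q := by positivity
    have htan : L + q ≤ Real.log ((S+t)*r/((n:ℝ)*c)) := by
      have h1 := log_tangent_ge (x := (S+t)*r/((n:ℝ)*c)) (x0 := S*r/((n:ℝ)*c))
        (by positivity) (by positivity)
      have h2 : ((S+t)*r/((n:ℝ)*c) - S*r/((n:ℝ)*c)) / ((S+t)*r/((n:ℝ)*c)) = q := by
        rw [hqdef]; field_simp [ne_of_gt hSt, ne_of_gt hnc, ne_of_gt hr]; ring
      rw [h2, ← hLdef] at h1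
      exact h1
    have hc1 : (1 - (β i + t))*r*(L + q) ≤ (1-β i)*r*L := by
      calc (1 - (β i + t))*r*(L + q) ≤ (1 - (β i + t))*r*Real.log ((S+t)*r/((n:ℝ)*c)) :=
            mul_le_mul_of_nonneg_left htan (mul_nonneg (by linarith) hr.le)
      _ ≤ _ := hN
    have hc1' : ((1 - (β i + t))*(L+q))*r ≤ ((1-β i)*L)*r := by
      calc ((1 - (β i + t))*(L+q))*r = (1 - (β i + t))*r*(L + q) := by ring
      _ ≤ (1-β i)*r*L := hc1
      _ = ((1-β i)*L)*r := by ring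
    have hc2 : (1 - (β i + t))*(L+q) ≤ (1-β i)*L := le_of_mul_le_mul_right hc1' hr
    have h11 : (1 - β i - t)*q ≤ t*L := by nlinarith [hc2]
    have h12 : (1 - β i - t)*t ≤ (t*L)*(S+t) := by
      calc (1 - β i - t)*t = ((1 - β i - t)*q)*(S+t) := by rw [mul_assoc, hq2]
      _ ≤ (t*L)*(S+t) := mul_le_mul_of_nonneg_right h11 hSt.le
    have h13 : t*(1 - β i - t) ≤ t*(L*(S+t)) := by
      calc t*(1 - β i - t) = (1 - β i - t)*t := mul_comm _ _
      _ ≤ (t*L)*(S+t) := h12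
      _ = t*(L*(S+t)) := by ring
    exact le_of_mul_le_mul_left h13 ht
  -- FOC lower: for i with β i > 0, L S ≤ 1 - β i
  have hdown : ∀ i, 0 < β i → L * S ≤ 1 - β i := by
    intro i hβi
    apply aux_limit_down L S (β i) hL hSpos hβi
    intro t ht htle
    have htβ : t ≤ β i := le_trans htle (min_le_left _ _)
    have htS : t ≤ S/2 := le_trans htle (min_le_right _ _)
    have hSt : 0 < S - t := by linarith
    have hN := hopt i (β i - t) ⟨by linarith, by linarith [hβ1 i]⟩
    rw [sum_update_mul, hsum, hmaxeq] at hN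
    have hexp : S*r - β i*r + (β i - t)*r = (S-t)*r := by ring
    rw [hexp] at hN
    have hY : 0 < (S-t)*r/((n:ℝ)*c) := by positivity
    set q := t/(S-t) with hqdef
    have hq2 : q*(S-t) = t := by rw [hqdef]; field_simp
    have htan : L - q ≤ Real.log (max ((S-t)*r/((n:ℝ)*c)) 1) := by
      have h1 := log_tangent_ge (x := (S-t)*r/((n:ℝ)*c)) (x0 := S*r/((n:ℝ)*c))
        hY (by positivity)
      have h2 : ((S-t)*r/((n:ℝ)*c) - S*r/((n:ℝ)*c)) / ((S-t)*r/((n:ℝ)*c)) = -q := by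
        rw [hqdef]; field_simp [ne_of_gt hSt, ne_of_gt hnc, ne_of_gt hr]; ring
      rw [h2, ← hLdef] at h1
      have h3 : Real.log ((S-t)*r/((n:ℝ)*c)) ≤ Real.log (max ((S-t)*r/((n:ℝ)*c)) 1) :=
        Real.log_le_log hY (le_max_left _ _)
      linarith
    have hc1 : (1 - (β i - t))*r*(L - q) ≤ (1-β i)*r*L := by
      calc (1 - (β i - t))*r*(L - q)
          ≤ (1 - (β i - t))*r*Real.log (max ((S-t)*r/((n:ℝ)*c)) 1) :=
            mul_le_mul_of_nonneg_left htan (mul_nonneg (by linarith [hβ1 i]) hr.le)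
      _ ≤ _ := hN
    have hc1' : ((1 - (β i - t))*(L-q))*r ≤ ((1-β i)*L)*r := by
      calc ((1 - (β i - t))*(L-q))*r = (1 - (β i - t))*r*(L - q) := by ring
      _ ≤ (1-β i)*r*L := hc1
      _ = ((1-β i)*L)*r := by ring
    have hc2 : (1 - (β i - t))*(L-q) ≤ (1-β i)*L := le_of_mul_le_mul_right hc1' hr
    have h11 : t*L ≤ (1 - β i + t)*q := by nlinarith [hc2]
    have h12 : (t*L)*(S-t) ≤ (1 - β i + t)*t := by
      calc (t*L)*(S-t) ≤ ((1 - β i + t)*q)*(S-t) := mul_le_mul_of_nonneg_right h11 hSt.le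
      _ = (1 - β i + t)*t := by rw [mul_assoc, hq2]
    have h13 : t*(L*(S-t)) ≤ t*(1 - β i + t) := by
      calc t*(L*(S-t)) = (t*L)*(S-t) := by ring
      _ ≤ (1 - β i + t)*t := h12
      _ = t*(1 - β i + t) := mul_comm _ _
    exact le_of_mul_le_mul_left h13 ht
  -- assemble
  have hex : ∃ i, 0 < β i := by
    by_contra h
    push_neg at h
    have : S ≤ 0 := Finset.sum_nonpos (fun i _ => h i)
    rw [lt_div_iff₀ hnc] at hSgt
    nlinarith
  obtain ⟨i0, hi0⟩ := hex
  have hLS : L*S = 1 - β i0 := le_antisymm (hdown i0 hi0) (hup i0)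
  have hLS1 : L*S < 1 := by linarith
  have hLS0 : 0 < L*S := mul_pos hL hSpos
  have hall : ∀ i, β i = 1 - L*S := by
    intro i
    have h1 : 0 < β i := by have := hup i; linarith
    have h2 := le_antisymm (hdown i h1) (hup i)
    linarith
  have hSval : S = (n:ℝ) * (1 - L*S) := by
    rw [hSdef]
    calc ∑ j, β j = ∑ _j : Fin n, (1 - L*S) := Finset.sum_congr rfl (fun j _ => hall j)
    _ = (n:ℝ) * (1 - L*S) := by
        rw [Finset.sum_const, Finset.card_univ, Fintype.card_fin, nsmul_eq_mul]
  set B := 1 - L*S with hBdef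
  have hBmem : B ∈ Set.Ioo (0:ℝ) 1 := ⟨by simp [hBdef]; linarith, by simp [hBdef]; linarith⟩
  have hnB : (n:ℝ)*B = S := hSval.symm
  have hBeq : (n:ℝ)*B*Real.log (B*r/c) = 1 - B := by
    have harg : B*r/c = S*r/((n:ℝ)*c) := by
      rw [← hnB]
      field_simp
    rw [harg, ← hLdef, hnB]
    have := mul_comm S L
    simp [hBdef]
    linarith
  have hfin : B = βN := eq_unique (n:ℝ) r c B βN (by linarith) hc hr hBmem hmem hBeq heq
  funext i
  rw [hall i]; exact hfin


/-- For `n ≥ 2` CPs and `r > n c > 0`, the neutral game has a unique Nash equilibrium: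
the symmetric profile at the unique `βN ∈ (0,1)` with
`n * βN * log (βN * r / c) = 1 - βN`. -/
theorem stmt_6 (n : ℕ) (hn : 2 ≤ n) (r c : ℝ) (hc : 0 < c) (hrn : n * c < r)
    (βN : ℝ) (hmem : βN ∈ Set.Ioo (0 : ℝ) 1)
    (heq : (n : ℝ) * βN * Real.log (βN * r / c) = 1 - βN) :
    ∀ β : Fin n → ℝ, IsNashNeutral n r c β ↔ β = (fun _ => βN) := by
  intro β
  constructor
  · exact nash_eq_symm n hn r c hc hrn βN hmem heq β
  · rintro rfl
    exact symm_is_nash n hn r c hc hrn βN hmem heq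
end

section
/- Let n ≥ 1 be an integer, r > c > 0, and let β^N be the unique β ∈ (0,1) with n·β·log(β·r/c) = 1 − β. Then: (i) the equilibrium ISP effort a^N = β^N·r/c − 1 is strictly positive; (ii) each CP's equilibrium surplus satisfies (1−β^N)·r·log(a^N+1) = (1−β^N)²·r/(n·β^N) > 0; and (iii) the ISP's equilibrium surplus r + n·c − (n+1)·β^N·r is strictly positive. -/
/-- Properties of the nonzero symmetric neutral equilibrium with `n` CPs: positive effort,
CP surplus identity and positivity, and positivity of the ISP surplus. -/
theorem stmt_7 (n : ℕ) (hn : 1 ≤ n) (r c : ℝ) (hc : 0 < c) (hrc : c < r)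
    (βN : ℝ) (hmem : βN ∈ Set.Ioo (0 : ℝ) 1)
    (heq : (n : ℝ) * βN * Real.log (βN * r / c) = 1 - βN) :
    0 < βN * r / c - 1 ∧
    ((1 - βN) * r * Real.log ((βN * r / c - 1) + 1) = (1 - βN) ^ 2 * r / ((n : ℝ) * βN) ∧
      0 < (1 - βN) ^ 2 * r / ((n : ℝ) * βN)) ∧
    0 < r + (n : ℝ) * c - ((n : ℝ) + 1) * βN * r := by
  obtain ⟨hβ0, hβ1⟩ := hmem
  have hn' : (1 : ℝ) ≤ (n : ℝ) := by exact_mod_cast hn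
  have hnβ : 0 < (n : ℝ) * βN := by positivity
  have hr : 0 < r := lt_trans hc hrc
  have hx0 : 0 < βN * r / c := by positivity
  have hlogpos : 0 < Real.log (βN * r / c) := by
    nlinarith [heq]
  have hx1 : 1 < βN * r / c := (Real.log_pos_iff hx0.le).mp hlogpos
  have hbr : c < βN * r := (one_lt_div hc).mp hx1
  have hbr0 : 0 < βN * r := lt_trans hc hbr
  have hlog : Real.log (βN * r / c) = (1 - βN) / ((n : ℝ) * βN) := by
    field_simp
    linarith [heq]
  refine ⟨by linarith, ⟨?_, ?_⟩, ?_⟩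
  · rw [show βN * r / c - 1 + 1 = βN * r / c by ring, hlog]
    field_simp
  · have h1 : 0 < (1 - βN) ^ 2 * r := by
      have : 0 < 1 - βN := by linarith
      positivity
    exact div_pos h1 hnβ
  · have hy0 : 0 < c / (βN * r) := by positivity
    have hy1 : c / (βN * r) < 1 := (div_lt_one hbr0).mpr hbr
    have hlt : Real.log (c / (βN * r)) < c / (βN * r) - 1 :=
      Real.log_lt_sub_one_of_pos hy0 (ne_of_lt hy1)
    have hlogneg : Real.log (c / (βN * r)) = - Real.log (βN * r / c) := by
      rw [← Real.log_inv]
      congr 1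
      field_simp
    rw [hlogneg] at hlt
    have key : 1 - c / (βN * r) < Real.log (βN * r / c) := by linarith
    have h2 : (n : ℝ) * βN * (1 - c / (βN * r)) < 1 - βN := by
      have := (mul_lt_mul_iff_right₀ hnβ).mpr key
      linarith [heq, this]
    have h3 : (n : ℝ) * βN * (1 - c / (βN * r)) = (n : ℝ) * βN - (n : ℝ) * c / r := by
      field_simp
    rw [h3] at h2
    have h4 : ((n : ℝ) * βN - (n : ℝ) * c / r) * r < (1 - βN) * r :=
      (mul_lt_mul_iff_left₀ hr).mpr h2
    have h5 : ((n : ℝ) * βN - (n : ℝ) * c / r) * r = (n : ℝ) * βN * r - (n : ℝ) * c := by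
      field_simp
    nlinarith [h4, h5]
end

section
/- Let n ≥ 2 be an integer and r > c > 0. Let β^NN be the unique β ∈ (0,1) with β·log(β·r/c) = 1 − β, and let β^N be the unique β ∈ (0,1) with n·β·log(β·r/c) = 1 − β. Then β^NN > β^N, and consequently the equilibrium ISP effort per CP is strictly higher in the non-neutral regime: β^NN·r/c − 1 > β^N·r/c − 1. -/
/-!
On `{β : β k ≥ 1}` the map `β ↦ β log (β k)` is nonnegative and increasing. If the neutral share
`βN` were at least `βNN`, then `1 - βN = n βN log (βN k) > βN log (βN k) ≥ βNN log (βNN k) = 1 - βNN`,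
contradicting `βN ≥ βNN`.
-/

open Real

lemma mul_log_mul_le_mul_log_mul {k x y : ℝ} (hk : 0 < k) (hx : 1 ≤ x * k) (hxy : x ≤ y) :
    x * log (x * k) ≤ y * log (y * k) := by
  have hlog_le : log (x * k) ≤ log (y * k) := log_le_log (by linarith) (by nlinarith)
  exact mul_le_mul hxy hlog_le (log_nonneg hx) (by nlinarith)

lemma lt_of_mul_log_mul_eq_one_sub {k m x y : ℝ} (hk : 0 < k) (hm : 1 < m)
    (hx : x ∈ Set.Ioo (0 : ℝ) 1) (hxeq : x * log (x * k) = 1 - x)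
    (hyeq : m * y * log (y * k) = 1 - y) : y < x := by
  obtain ⟨hx0, hx1⟩ := hx
  by_contra! hxy
  have hlog_pos : 0 < log (x * k) := by nlinarith
  have hxk : 1 ≤ x * k := ((log_pos_iff (by positivity)).1 hlog_pos).le
  have hmono := mul_log_mul_le_mul_log_mul hk hxk hxy
  have hpos : 0 < y * log (y * k) := by linarith
  have hgrow : y * log (y * k) < m * y * log (y * k) := by nlinarith
  linarith

theorem stmt_8_general (n : ℕ) (hn : 2 ≤ n) (r c : ℝ) (hc : 0 < c) (hrc : c < r)
    (βNN βN : ℝ)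
    (hmemNN : βNN ∈ Set.Ioo (0 : ℝ) 1)
    (heqNN : βNN * Real.log (βNN * r / c) = 1 - βNN)
    (heqN : (n : ℝ) * βN * Real.log (βN * r / c) = 1 - βN) :
    βN < βNN ∧ βN * r / c - 1 < βNN * r / c - 1 := by
  have hk : 0 < r / c := div_pos (hc.trans hrc) hc
  have hn1 : (1 : ℝ) < n := by exact_mod_cast hn
  simp only [mul_div_assoc] at heqNN heqN ⊢
  have hlt : βN < βNN := lt_of_mul_log_mul_eq_one_sub hk hn1 hmemNN heqNN heqN
  exact ⟨hlt, by gcongr⟩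

/-- For `n ≥ 2` and `r > c > 0`, the non-neutral equilibrium share exceeds the neutral one,
and hence the equilibrium ISP effort per CP is strictly higher in the non-neutral regime. -/
theorem stmt_8 (n : ℕ) (hn : 2 ≤ n) (r c : ℝ) (hc : 0 < c) (hrc : c < r)
    (βNN βN : ℝ)
    (hmemNN : βNN ∈ Set.Ioo (0 : ℝ) 1)
    (heqNN : βNN * Real.log (βNN * r / c) = 1 - βNN)
    (hmemN : βN ∈ Set.Ioo (0 : ℝ) 1)
    (heqN : (n : ℝ) * βN * Real.log (βN * r / c) = 1 - βN) :
    βN < βNN ∧ βN * r / c - 1 < βNN * r / c - 1 :=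
  stmt_8_general n hn r c hc hrc βNN βN hmemNN heqNN heqN
end

section
/- Let n ≥ 2 be an integer and r > c > 0. Let β^NN be the unique β ∈ (0,1) with β·log(β·r/c) = 1 − β, and β^N the unique β ∈ (0,1) with n·β·log(β·r/c) = 1 − β. Then each CP's equilibrium surplus is strictly higher in the non-neutral regime: (1−β^NN)²·r/β^NN > (1−β^N)²·r/(n·β^N). -/
/-- For `n ≥ 2` and `r > c > 0`, each CP's equilibrium surplus is strictly higher in the
non-neutral regime than in the neutral regime. -/
theorem stmt_9 (n : ℕ) (hn : 2 ≤ n) (r c : ℝ) (hc : 0 < c) (hrc : c < r)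
    (βNN βN : ℝ)
    (hmemNN : βNN ∈ Set.Ioo (0 : ℝ) 1)
    (heqNN : βNN * Real.log (βNN * r / c) = 1 - βNN)
    (hmemN : βN ∈ Set.Ioo (0 : ℝ) 1)
    (heqN : (n : ℝ) * βN * Real.log (βN * r / c) = 1 - βN) :
    (1 - βN) ^ 2 * r / ((n : ℝ) * βN) < (1 - βNN) ^ 2 * r / βNN := by
  obtain ⟨hx0, hx1⟩ := hmemNN
  obtain ⟨hy0, hy1⟩ := hmemN
  have hr0 : (0:ℝ) < r := lt_trans hc hrc
  have hN : (2:ℝ) ≤ (n:ℝ) := by exact_mod_cast hn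
  have hN0 : (0:ℝ) < (n:ℝ) := by linarith
  obtain ⟨a, ha_def⟩ : ∃ a : ℝ, a = (1 - βNN)/βNN := ⟨_, rfl⟩
  obtain ⟨b, hb_def⟩ : ∃ b : ℝ, b = (1 - βN)/βN := ⟨_, rfl⟩
  have ha : 0 < a := ha_def ▸ div_pos (by linarith) hx0
  have hb : 0 < b := hb_def ▸ div_pos (by linarith) hy0
  have h1x : 1 - βNN = a * βNN := by
    rw [ha_def]; rw [div_mul_cancel₀ _ hx0.ne']
  have h1y : 1 - βN = b * βN := by
    rw [hb_def]; rw [div_mul_cancel₀ _ hy0.ne']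
  have hLx : Real.log (βNN * r / c) = a := by
    rw [ha_def, eq_div_iff hx0.ne']
    linarith [heqNN]
  have hLy : Real.log (βN * r / c) = b / (n:ℝ) := by
    rw [hb_def, div_div, eq_div_iff (by positivity : (0:ℝ) < βN * (n:ℝ)).ne']
    linear_combination heqN
  -- key relation
  have ex : Real.log (βNN * r / c) = Real.log βNN + Real.log r - Real.log c := by
    rw [Real.log_div (by positivity) hc.ne', Real.log_mul hx0.ne' hr0.ne']
  have ey : Real.log (βN * r / c) = Real.log βN + Real.log r - Real.log c := by
    rw [Real.log_div (by positivity) hc.ne', Real.log_mul hy0.ne' hr0.ne']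
  have hrel0 : a - b / (n:ℝ) = Real.log βNN - Real.log βN := by
    rw [← hLx, ← hLy, ex, ey]; ring
  have hxa : βNN * (1 + a) = 1 := by
    rw [ha_def]; field_simp; ring
  have hyb : βN * (1 + b) = 1 := by
    rw [hb_def]; field_simp; ring
  have hx' : βNN = 1 / (1 + a) := by
    rw [eq_div_iff (by positivity : (0:ℝ) < 1 + a).ne']; exact hxa
  have hy' : βN = 1 / (1 + b) := by
    rw [eq_div_iff (by positivity : (0:ℝ) < 1 + b).ne']; exact hyb
  have hlogx : Real.log βNN = - Real.log (1 + a) := by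
    rw [hx', one_div, Real.log_inv]
  have hlogy : Real.log βN = - Real.log (1 + b) := by
    rw [hy', one_div, Real.log_inv]
  have hrel : a - b / (n:ℝ) = Real.log (1 + b) - Real.log (1 + a) := by
    rw [hrel0, hlogx, hlogy]; ring
  -- a < b
  have hab : a < b := by
    by_contra h
    push_neg at h
    have hxy : βNN ≤ βN := by
      rw [ha_def, hb_def, div_le_div_iff₀ hy0 hx0] at h
      nlinarith
    have hlog : Real.log βNN ≤ Real.log βN := Real.log_le_log hx0 hxy
    have h2 : a ≤ b / (n:ℝ) := by linarith [hrel0]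
    have h3 : b / (n:ℝ) ≤ b / 2 := by
      apply div_le_div_of_nonneg_left hb.le (by norm_num) hN
    linarith
  -- log lower bound
  have hD : (b - a)/(1 + b) ≤ Real.log (1 + b) - Real.log (1 + a) := by
    have ht : (0:ℝ) < (1 + a)/(1 + b) := by positivity
    have := Real.log_le_sub_one_of_pos ht
    rw [Real.log_div (by positivity : (0:ℝ) < 1 + a).ne' (by positivity : (0:ℝ) < 1 + b).ne'] at this
    have he : (1 + a)/(1 + b) - 1 = (a - b)/(1 + b) := by
      field_simp
      ring
    rw [he] at this
    have : Real.log (1 + a) - Real.log (1 + b) ≤ (a - b)/(1 + b) := this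
    have hd : (a - b)/(1+b) = -((b-a)/(1+b)) := by ring
    linarith
  have hD' : (b - a)/(1 + b) ≤ a - b / (n:ℝ) := by linarith [hrel]
  have hb1 : (0:ℝ) < 1 + b := by linarith
  rw [div_le_iff₀ hb1] at hD'
  have hbn : b / (n:ℝ) * (n:ℝ) = b := div_mul_cancel₀ b hN0.ne'
  have h5 : b / (n:ℝ) * (1 + b) ≤ a * (1 + b) - (b - a) := by nlinarith [hD']
  have h6 := mul_le_mul_of_nonneg_left h5 hN0.le
  have h7 : (n:ℝ) * (b / (n:ℝ) * (1 + b)) = b * (1 + b) := by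
    field_simp
  have hK : b * (1 + b) ≤ (n:ℝ) * (a * (1 + b) - (b - a)) := by linarith
  have hsq : (0:ℝ) < (b - a)^2 := pow_pos (by linarith) 2
  have hba : (0:ℝ) ≤ b * (1 + a) := by positivity
  have hKm : b * (1 + a) * (b * (1 + b)) ≤ b * (1 + a) * ((n:ℝ) * (a * (1 + b) - (b - a))) :=
    mul_le_mul_of_nonneg_left hK hba
  have hid : b * (1 + a) * ((n:ℝ) * (a * (1 + b) - (b - a)))
      = (n:ℝ) * (a^2 * (1+b)^2) - (n:ℝ) * (b-a)^2 := by ring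
  have hpos : (0:ℝ) < (n:ℝ) * (b-a)^2 := mul_pos hN0 hsq
  have h8 : (b^2 * (1 + a)) * (1 + b) < ((n:ℝ) * a^2 * (1 + b)) * (1 + b) := by
    have e0 : (b^2 * (1 + a)) * (1 + b) = b * (1 + a) * (b * (1 + b)) := by ring
    have e1 : ((n:ℝ) * a^2 * (1 + b)) * (1 + b) = (n:ℝ) * (a^2 * (1+b)^2) := by ring
    rw [e0, e1]
    calc b * (1 + a) * (b * (1 + b)) ≤ b * (1 + a) * ((n:ℝ) * (a * (1 + b) - (b - a))) := hKm
      _ = (n:ℝ) * (a^2 * (1+b)^2) - (n:ℝ) * (b-a)^2 := hid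
      _ < (n:ℝ) * (a^2 * (1+b)^2) := by linarith
  have key : b^2 * (1 + a) < (n:ℝ) * a^2 * (1 + b) := (mul_lt_mul_iff_of_pos_right hb1).mp h8
  -- rewrite goal
  have eL : (1 - βN) ^ 2 * r / ((n : ℝ) * βN) = b^2 * r / ((n:ℝ) * (1 + b)) := by
    rw [h1y, hy']; field_simp
  have eR : (1 - βNN) ^ 2 * r / βNN = a^2 * r / (1 + a) := by
    rw [h1x, hx']; field_simp
  rw [eL, eR]
  rw [div_lt_div_iff₀ (by positivity : (0:ℝ) < (n:ℝ)*(1+b)) (by positivity : (0:ℝ) < 1+a)]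
  have hh : r * (b^2 * (1 + a)) < r * ((n:ℝ) * a^2 * (1 + b)) :=
    mul_lt_mul_of_pos_left key hr0
  linarith only [hh]
end

section
/- Let n ≥ 2 be an integer and r > c > 0. Let β^NN be the unique β ∈ (0,1) with β·log(β·r/c) = 1 − β, and β^N the unique β ∈ (0,1) with n·β·log(β·r/c) = 1 − β. Then the ISP's equilibrium surplus is strictly higher in the non-neutral regime: n·r + n·c − 2·n·β^NN·r > r + n·c − (n+1)·β^N·r. -/
/-!
With `L = log (r / c)`, the shares `x = βNN` and `y = βN` solve `x (log x + L) = 1 - x` and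
`n y (log y + L) = 1 - y`. Eliminating `L` and using `log (y / x) ≤ y / x - 1` bounds `x` by a
rational function of `y`; the claim follows from that bound because the gap between the two
sides is a positive multiple of `(n - 1) (1 - y)²`.
-/

open Real

theorem mul_log_div_le_sub {x y : ℝ} (hx : 0 < x) (hy : 0 < y) : x * log (y / x) ≤ y - x := by
  have h := mul_le_mul_of_nonneg_left (log_le_sub_one_of_pos (div_pos hy hx)) hx.le
  rwa [mul_sub_one, mul_div_cancel₀ y hx.ne'] at h

theorem log_mul_div_eq_log_add {β r c : ℝ} (hβ : 0 < β) (hr : 0 < r) (hc : 0 < c) :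
    log (β * r / c) = log β + log (r / c) := by
  rw [mul_div_assoc, log_mul hβ.ne' (div_pos hr hc).ne']

theorem share_bound_of_log_eq {k L x y : ℝ} (hk : 0 ≤ k) (hx : 0 < x) (hy : 0 < y)
    (hxL : x * (log x + L) = 1 - x) (hyL : k * y * (log y + L) = 1 - y) :
    x * (1 - y + 2 * k * y) ≤ k * y * (1 + y) := by
  have hlog : x * (log y - log x) ≤ y - x := by
    simpa only [log_div hy.ne' hx.ne'] using mul_log_div_le_sub hx hy
  have hscaled := mul_le_mul_of_nonneg_left hlog (mul_nonneg hk hy.le)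
  -- `k y x (log y - log x) = x (1 - y) - k y (1 - x)`: the common `L` cancels.
  linear_combination hscaled - x * hyL + k * y * hxL

theorem two_mul_lt_of_share_bound {N x y : ℝ} (hN : 1 < N) (hy0 : 0 ≤ y) (hy1 : y < 1)
    (hxy : x * (1 - y + 2 * N * y) ≤ N * y * (1 + y)) :
    2 * N * x < N - 1 + (N + 1) * y := by
  have hD : 0 < 1 - y + 2 * N * y := by nlinarith
  have hgap : 0 < (N - 1) * (1 - y) ^ 2 := mul_pos (by linarith) (pow_pos (by linarith) 2)
  refine lt_of_mul_lt_mul_right ?_ hD.le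
  nlinarith

/-- For `n ≥ 2` and `r > c > 0`, the ISP's equilibrium surplus is strictly higher in the
non-neutral regime than in the neutral regime. -/
theorem stmt_10 (n : ℕ) (hn : 2 ≤ n) (r c : ℝ) (hc : 0 < c) (hrc : c < r)
    (βNN βN : ℝ)
    (hmemNN : βNN ∈ Set.Ioo (0 : ℝ) 1)
    (heqNN : βNN * Real.log (βNN * r / c) = 1 - βNN)
    (hmemN : βN ∈ Set.Ioo (0 : ℝ) 1)
    (heqN : (n : ℝ) * βN * Real.log (βN * r / c) = 1 - βN) :
    r + (n : ℝ) * c - ((n : ℝ) + 1) * βN * r <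
      (n : ℝ) * r + (n : ℝ) * c - 2 * (n : ℝ) * βNN * r := by
  obtain ⟨hx0, -⟩ := hmemNN
  obtain ⟨hy0, hy1⟩ := hmemN
  have hr : 0 < r := hc.trans hrc
  have hN : (1 : ℝ) < n := by exact_mod_cast hn
  rw [log_mul_div_eq_log_add hx0 hr hc] at heqNN
  rw [log_mul_div_eq_log_add hy0 hr hc] at heqN
  have hbound := two_mul_lt_of_share_bound hN hy0.le hy1
    (share_bound_of_log_eq (Nat.cast_nonneg n) hx0 hy0 heqNN heqN)
  linarith [mul_lt_mul_of_pos_right hbound hr]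
end

section
/- Fix r > c > 0 and for each integer n ≥ 1 let β^N(n) be the unique β ∈ (0,1) with n·β·log(β·r/c) = 1 − β. Then the sequence n ↦ β^N(n) is strictly decreasing. -/
open Real Set

/- The equilibrium equation says `β log (β r / c) / (1 - β) = 1 / n`. On `(c / r, 1)` the left
side is strictly increasing (a positive increasing numerator over a positive decreasing
denominator), and every solution lies in that interval, so a larger `n` forces a smaller `β`. -/

lemma strictMonoOn_mul_log_div_one_sub {r c : ℝ} (hr : 0 < r) (hc : 0 < c) :
    StrictMonoOn (fun x => x * log (x * r / c) / (1 - x)) (Ioo (c / r) 1) := by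
  intro x ⟨hcx, hx1⟩ y ⟨_, hy1⟩ hxy
  have hx : 0 < x := (div_pos hc hr).trans hcx
  have hlog_x : 0 < log (x * r / c) :=
    log_pos <| by rwa [lt_div_iff₀ hc, one_mul, ← div_lt_iff₀ hr]
  have hlog_xy : log (x * r / c) < log (y * r / c) := by
    apply log_lt_log (by positivity)
    gcongr
  calc x * log (x * r / c) / (1 - x)
      < y * log (y * r / c) / (1 - x) := by gcongr
    _ ≤ y * log (y * r / c) / (1 - y) := by
        gcongr
        exact mul_nonneg (hx.trans hxy).le (hlog_x.trans hlog_xy).le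

lemma mem_Ioo_and_mul_log_div_one_sub_eq_one_div {r c n x : ℝ} (hr : 0 < r) (hc : 0 < c)
    (hn : 0 < n) (hx : x ∈ Ioo 0 1) (heq : n * x * log (x * r / c) = 1 - x) :
    x ∈ Ioo (c / r) 1 ∧ x * log (x * r / c) / (1 - x) = 1 / n := by
  obtain ⟨hx0, hx1⟩ := hx
  have hlog : 0 < log (x * r / c) := by
    have : 0 < n * x * log (x * r / c) := by linarith
    exact pos_of_mul_pos_right this (by positivity)
  refine ⟨⟨?_, hx1⟩, ?_⟩
  · have := (log_pos_iff (by positivity)).mp hlog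
    rwa [lt_div_iff₀ hc, one_mul, ← div_lt_iff₀ hr] at this
  · rw [div_eq_div_iff (by linarith) hn.ne', ← heq]
    ring

/-- The neutral-regime equilibrium share `β^N(n)` is a strictly decreasing function of the
number of CPs `n ≥ 1`. -/
theorem stmt_11 (r c : ℝ) (hc : 0 < c) (hrc : c < r) (β : ℕ → ℝ)
    (hmem : ∀ n : ℕ, 1 ≤ n → β n ∈ Set.Ioo (0 : ℝ) 1)
    (heq : ∀ n : ℕ, 1 ≤ n → (n : ℝ) * β n * Real.log (β n * r / c) = 1 - β n) :
    ∀ m n : ℕ, 1 ≤ m → m < n → β n < β m := by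
  intro m n hm hmn
  have hr : 0 < r := hc.trans hrc
  have hn : 1 ≤ n := hm.trans hmn.le
  obtain ⟨hβm, hfm⟩ := mem_Ioo_and_mul_log_div_one_sub_eq_one_div hr hc
    (by positivity) (hmem m hm) (heq m hm)
  obtain ⟨hβn, hfn⟩ := mem_Ioo_and_mul_log_div_one_sub_eq_one_div hr hc
    (by positivity) (hmem n hn) (heq n hn)
  rw [← (strictMonoOn_mul_log_div_one_sub hr hc).lt_iff_lt hβn hβm, hfm, hfn]
  gcongr
end

section
/- Fix r > c > 0 and for each integer n ≥ 1 let β^N(n) be the unique β ∈ (0,1) with n·β·log(β·r/c) = 1 − β, and let a^N(n) = β^N(n)·r/c − 1 be the per-CP ISP effort. Then n ↦ a^N(n) is strictly decreasing, while the total effort n ↦ n·a^N(n) is strictly increasing. -/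
lemma fAnti_aux : StrictAntiOn (fun x : ℝ => (x - 1) / (x * Real.log x)) (Set.Ioi 1) := by
  apply strictAntiOn_of_deriv_neg (convex_Ioi 1)
  · apply ContinuousOn.div
    · exact (continuous_id.sub continuous_const).continuousOn
    · exact continuousOn_id.mul (Real.continuousOn_log.mono (fun x hx => by
        simp only [Set.mem_compl_iff, Set.mem_singleton_iff]
        exact ne_of_gt (zero_lt_one.trans hx)))
    · intro x hx
      have hx1 : (1:ℝ) < x := hx
      exact (mul_pos (zero_lt_one.trans hx1) (Real.log_pos hx1)).ne'
  · intro x hx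
    rw [interior_Ioi] at hx
    have hx0 : (0:ℝ) < x := zero_lt_one.trans hx
    have hlog : 0 < Real.log x := Real.log_pos hx
    have h1 : HasDerivAt (fun x : ℝ => x * Real.log x) (Real.log x + 1) x :=
      Real.hasDerivAt_mul_log hx0.ne'
    have h2 : HasDerivAt (fun x : ℝ => x - 1) 1 x := (hasDerivAt_id x).sub_const 1
    have hden : x * Real.log x ≠ 0 := (mul_pos hx0 hlog).ne'
    have h3 := h2.div h1 hden
    rw [show (fun x : ℝ => (x - 1) / (x * Real.log x)) = (fun x : ℝ => x - 1) / (fun x : ℝ => x * Real.log x) from rfl, h3.deriv]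
    have hls : Real.log x < x - 1 := Real.log_lt_sub_one_of_pos hx0 (ne_of_gt hx)
    apply div_neg_of_neg_of_pos
    · nlinarith
    · positivity

/-- The per-CP equilibrium effort `a^N(n) = β^N(n) r / c - 1` is strictly decreasing in `n`,
while the total effort `n * a^N(n)` is strictly increasing in `n`. -/
theorem stmt_12 (r c : ℝ) (hc : 0 < c) (hrc : c < r) (β : ℕ → ℝ)
    (hmem : ∀ n : ℕ, 1 ≤ n → β n ∈ Set.Ioo (0 : ℝ) 1)
    (heq : ∀ n : ℕ, 1 ≤ n → (n : ℝ) * β n * Real.log (β n * r / c) = 1 - β n) :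
    (∀ m n : ℕ, 1 ≤ m → m < n → β n * r / c - 1 < β m * r / c - 1) ∧
    (∀ m n : ℕ, 1 ≤ m → m < n →
      (m : ℝ) * (β m * r / c - 1) < (n : ℝ) * (β n * r / c - 1)) := by
  have hr : 0 < r := hc.trans hrc
  -- the log of β n * r / c is positive, hence β n * r / c > 1
  have hlogpos : ∀ n : ℕ, 1 ≤ n → 0 < Real.log (β n * r / c) := by
    intro n hn
    have hb := hmem n hn
    have he := heq n hn
    have hn1 : (1:ℝ) ≤ (n : ℝ) := by exact_mod_cast hn
    by_contra h
    push_neg at h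
    have hnb : 0 < (n : ℝ) * β n := by nlinarith [hb.1]
    nlinarith [mul_nonpos_of_nonneg_of_nonpos hnb.le h, hb.2]
  have hgt1 : ∀ n : ℕ, 1 ≤ n → 1 < β n * r / c := by
    intro n hn
    have hb := hmem n hn
    have hpos : 0 < β n * r / c := by
      have := hb.1; positivity
    exact (Real.log_pos_iff hpos.le).1 (hlogpos n hn)
  -- β is strictly decreasing
  have hβ : ∀ m n : ℕ, 1 ≤ m → m < n → β n < β m := by
    intro m n hm hmn
    have hn : 1 ≤ n := hm.trans hmn.le
    have hbm := hmem m hm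
    have hbn := hmem n hn
    have hem := heq m hm
    have hen := heq n hn
    have hLm := hlogpos m hm
    have hLn := hlogpos n hn
    by_contra h
    push_neg at h  -- β m ≤ β n
    have hxy : β m * r / c ≤ β n * r / c := by gcongr
    have hL : Real.log (β m * r / c) ≤ Real.log (β n * r / c) :=
      Real.log_le_log (by have := hbm.1; positivity) hxy
    have hmn' : (m : ℝ) < (n : ℝ) := by exact_mod_cast hmn
    have hm1 : (1:ℝ) ≤ (m : ℝ) := by exact_mod_cast hm
    have hbl : β m * Real.log (β m * r / c) ≤ β n * Real.log (β n * r / c) :=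
      mul_le_mul h hL hLm.le hbn.1.le
    have hbl' : 0 < β n * Real.log (β n * r / c) := mul_pos hbn.1 hLn
    have hlt : (m : ℝ) * β m * Real.log (β m * r / c)
        < (n : ℝ) * β n * Real.log (β n * r / c) := by
      calc (m : ℝ) * β m * Real.log (β m * r / c)
          = (m : ℝ) * (β m * Real.log (β m * r / c)) := by ring
        _ ≤ (m : ℝ) * (β n * Real.log (β n * r / c)) :=
            mul_le_mul_of_nonneg_left hbl (by positivity)
        _ < (n : ℝ) * (β n * Real.log (β n * r / c)) :=
            mul_lt_mul_of_pos_right hmn' hbl'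
        _ = (n : ℝ) * β n * Real.log (β n * r / c) := by ring
    linarith [hem, hen, hlt]
  constructor
  · intro m n hm hmn
    have := hβ m n hm hmn
    gcongr
  · intro m n hm hmn
    have hn : 1 ≤ n := hm.trans hmn.le
    have hbm := hmem m hm
    have hbn := hmem n hn
    have hem := heq m hm
    have hen := heq n hn
    set x := β m * r / c with hxdef
    set y := β n * r / c with hydef
    set Lx := Real.log x with hLxdef
    set Ly := Real.log y with hLydef
    have hx1 : 1 < x := hgt1 m hm
    have hy1 : 1 < y := hgt1 n hn
    have hLx : 0 < Lx := hlogpos m hm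
    have hLy : 0 < Ly := hlogpos n hn
    have hyx : y < x := by
      have := hβ m n hm hmn
      rw [hxdef, hydef]; gcongr
    have hxk : x < r / c := by
      rw [hxdef, mul_div_assoc]
      exact mul_lt_of_lt_one_left (by positivity) hbm.2
    have hxpos : (0:ℝ) < x := zero_lt_one.trans hx1
    have hypos : (0:ℝ) < y := zero_lt_one.trans hy1
    -- rewrite m * (x - 1) and n * (y - 1)
    have hmx : (m:ℝ) * (x * Lx) = (1 - β m) * (r / c) := by
      have h' : (m:ℝ) * (x * Lx) = ((m:ℝ) * β m * Lx) * (r / c) := by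
        rw [hxdef]; ring
      rw [h', hem]
    have hny : (n:ℝ) * (y * Ly) = (1 - β n) * (r / c) := by
      have h' : (n:ℝ) * (y * Ly) = ((n:ℝ) * β n * Ly) * (r / c) := by
        rw [hydef]; ring
      rw [h', hen]
    have hrcx : r / c - x = (1 - β m) * (r / c) := by rw [hxdef]; ring
    have hrcy : r / c - y = (1 - β n) * (r / c) := by rw [hydef]; ring
    have em : (m:ℝ) * (x - 1) = (r / c - x) * ((x - 1) / (x * Lx)) := by
      rw [mul_div_assoc', eq_div_iff (mul_pos hxpos hLx).ne', hrcx]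
      linear_combination (x - 1) * hmx
    have en : (n:ℝ) * (y - 1) = (r / c - y) * ((y - 1) / (y * Ly)) := by
      rw [mul_div_assoc', eq_div_iff (mul_pos hypos hLy).ne', hrcy]
      linear_combination (y - 1) * hny
    have hf : (x - 1) / (x * Lx) < (y - 1) / (y * Ly) := by
      have h := fAnti_aux (Set.mem_Ioi.2 hy1) (Set.mem_Ioi.2 hx1) hyx
      simpa [hLxdef, hLydef] using h
    have hfxpos : 0 < (x - 1) / (x * Lx) :=
      div_pos (by linarith) (mul_pos hxpos hLx)
    rw [em, en]
    nlinarith [hf, hfxpos, hxk, hyx]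
end

section
/- Fix r > c > 0 and for each integer n ≥ 1 let β^N(n) be the unique β ∈ (0,1) with n·β·log(β·r/c) = 1 − β. Then each CP's equilibrium surplus U(n) = (1−β^N(n))²·r/(n·β^N(n)) is a strictly decreasing function of n, and U(n) → 0 as n → ∞. -/
/-!
Put `k = r / c` and `L = log (β k)`. The equilibrium equation `n β L = 1 - β` forces
`L > 0`, i.e. `β > 1 / k`, and since `β L` increases with `β` it makes `β^N(n)` strictly
decreasing in `n`. Substituting `n β = (1 - β) / L` gives `U(n) = r (1 - β) L`, and
`t ↦ (1 - t) log (t k)` increases on the range of `β^N` because there `log (t k) ≤ (1 - t) / t`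
(by `log x < x - 1`).
Finally `U(n) ≤ r / (n β) < r k / n → 0`.
-/

open Real Filter Set

/-- `β` solves the neutral equilibrium equation for `n` providers, where `k = r / c`. -/
def IsNeutralEquilibrium (k n β : ℝ) : Prop :=
  β ∈ Ioo 0 1 ∧ n * β * log (β * k) = 1 - β

namespace IsNeutralEquilibrium

variable {k n m β γ : ℝ}

lemma log_pos (h : IsNeutralEquilibrium k n β) (hn : 0 < n) : 0 < log (β * k) := by
  obtain ⟨⟨hβ0, hβ1⟩, heq⟩ := h
  have : 0 < n * β := mul_pos hn hβ0
  nlinarith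

lemma log_le_one_sub_div (h : IsNeutralEquilibrium k n β) (hn : 1 ≤ n) :
    log (β * k) ≤ (1 - β) / β := by
  have hL := h.log_pos (by linarith)
  obtain ⟨⟨hβ0, _⟩, heq⟩ := h
  rw [le_div_iff₀ hβ0]
  nlinarith [mul_nonneg (sub_nonneg.2 hn) (mul_nonneg hβ0.le hL.le)]

lemma inv_lt (h : IsNeutralEquilibrium k n β) (hn : 0 < n) (hk : 0 < k) : β⁻¹ < k := by
  have hβ0 := h.1.1
  have h1 : 1 < β * k := by
    by_contra! hle
    exact (h.log_pos hn).not_ge (Real.log_nonpos (by positivity) hle)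
  rw [inv_lt_iff_one_lt_mul₀ hβ0, mul_comm]
  exact h1

lemma share_lt_of_lt (hm : IsNeutralEquilibrium k m γ) (hn : IsNeutralEquilibrium k n β)
    (hk : 0 < k) (hm0 : 0 < m) (hmn : m < n) : β < γ := by
  by_contra! hγβ
  have hLm := hm.log_pos hm0
  have hLn := hn.log_pos (hm0.trans hmn)
  have hγ0 := hm.1.1
  have hβ0 := hn.1.1
  have hLle : log (γ * k) ≤ log (β * k) :=
    Real.log_le_log (by positivity) (mul_le_mul_of_nonneg_right hγβ hk.le)
  have : m * γ * log (γ * k) < n * β * log (β * k) :=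
    calc m * γ * log (γ * k) ≤ m * β * log (β * k) := by gcongr
      _ < n * β * log (β * k) := by gcongr
  linarith [hm.2, hn.2]

lemma surplus_eq (h : IsNeutralEquilibrium k n β) (hn : 0 < n) (r : ℝ) :
    (1 - β) ^ 2 * r / (n * β) = r * ((1 - β) * log (β * k)) := by
  rw [div_eq_iff (mul_pos hn h.1.1).ne']
  linear_combination (-(r * (1 - β))) * h.2

lemma surplus_le (h : IsNeutralEquilibrium k n β) (hn : 0 < n) (hk : 0 < k) {r : ℝ}
    (hr : 0 < r) : (1 - β) ^ 2 * r / (n * β) ≤ r * k / n := by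
  obtain ⟨hβ0, hβ1⟩ := h.1
  calc (1 - β) ^ 2 * r / (n * β) ≤ r / (n * β) := by
        gcongr; nlinarith [mul_pos hβ0 (sub_pos.2 hβ1)]
    _ = r * β⁻¹ / n := by field_simp
    _ ≤ r * k / n := by gcongr; exact (h.inv_lt hn hk).le

end IsNeutralEquilibrium

lemma one_sub_mul_log_lt_of_log_le {k a b : ℝ} (hk : 0 < k) (ha : 0 < a) (hab : a < b)
    (hb1 : b < 1) (hL : log (b * k) ≤ (1 - b) / b) :
    (1 - a) * log (a * k) < (1 - b) * log (b * k) := by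
  have hb : 0 < b := ha.trans hab
  have hsplit : log (a * k) = log (a / b) + log (b * k) := by
    rw [← Real.log_mul (by positivity) (by positivity)]
    field_simp
  have hratio : log (a / b) < a / b - 1 :=
    Real.log_lt_sub_one_of_pos (by positivity)
      (by rw [Ne, div_eq_one_iff_eq hb.ne']; exact hab.ne)
  have hratio' : (b - a) / b < -log (a / b) := by
    have : a / b - 1 = -((b - a) / b) := by field_simp; ring
    linarith
  have hmono : (b - a) * log (a * k) ≤ (b - a) * log (b * k) := by gcongr
  have hL' : (b - a) * log (b * k) ≤ (1 - b) * ((b - a) / b) := by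
    calc (b - a) * log (b * k) ≤ (b - a) * ((1 - b) / b) := by gcongr
      _ = (1 - b) * ((b - a) / b) := by ring
  have hgap : (1 - b) * ((b - a) / b) < (1 - b) * -log (a / b) := by gcongr
  have hdecomp : (1 - a) * log (a * k) =
      (1 - b) * log (b * k) + (1 - b) * log (a / b) + (b - a) * log (a * k) := by
    rw [hsplit]; ring
  linarith

/-- Each CP's neutral-regime equilibrium surplus `U(n) = (1-β^N(n))² r / (n β^N(n))` is
strictly decreasing in `n` and tends to `0` as `n → ∞`. -/
theorem stmt_13 (r c : ℝ) (hc : 0 < c) (hrc : c < r) (β : ℕ → ℝ)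
    (hmem : ∀ n : ℕ, 1 ≤ n → β n ∈ Set.Ioo (0 : ℝ) 1)
    (heq : ∀ n : ℕ, 1 ≤ n → (n : ℝ) * β n * Real.log (β n * r / c) = 1 - β n) :
    (∀ m n : ℕ, 1 ≤ m → m < n →
      (1 - β n) ^ 2 * r / ((n : ℝ) * β n) < (1 - β m) ^ 2 * r / ((m : ℝ) * β m)) ∧
    Filter.Tendsto (fun n : ℕ => (1 - β n) ^ 2 * r / ((n : ℝ) * β n))
      Filter.atTop (nhds 0) := by
  have hr : 0 < r := hc.trans hrc
  have hk : 0 < r / c := div_pos hr hc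
  have hβ : ∀ n : ℕ, 1 ≤ n → IsNeutralEquilibrium (r / c) n (β n) := fun n hn =>
    ⟨hmem n hn, by rw [← mul_div_assoc]; exact heq n hn⟩
  have hcast : ∀ n : ℕ, 1 ≤ n → (1 : ℝ) ≤ n := fun n hn => by exact_mod_cast hn
  refine ⟨fun m n hm hmn => ?_, ?_⟩
  · have hn : 1 ≤ n := hm.trans hmn.le
    have hm0 : (0 : ℝ) < m := by linarith [hcast m hm]
    rw [(hβ m hm).surplus_eq hm0, (hβ n hn).surplus_eq (hm0.trans (by exact_mod_cast hmn))]
    exact mul_lt_mul_of_pos_left (one_sub_mul_log_lt_of_log_le hk (hmem n hn).1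
      ((hβ m hm).share_lt_of_lt (hβ n hn) hk hm0 (by exact_mod_cast hmn)) (hmem m hm).2
      ((hβ m hm).log_le_one_sub_div (hcast m hm))) hr
  · refine tendsto_of_tendsto_of_tendsto_of_le_of_le' tendsto_const_nhds
      (tendsto_const_div_atTop_nhds_zero_nat (r * (r / c))) ?_ ?_ <;>
      filter_upwards [eventually_ge_atTop 1] with n hn
    · have := (hmem n hn).1
      have := hcast n hn
      positivity
    · exact (hβ n hn).surplus_le (by linarith [hcast n hn]) hk hr
end

section
/- Fix r > c > 0 and for each integer n ≥ 1 let β^N(n) be the unique β ∈ (0,1) with n·β·log(β·r/c) = 1 − β. Then the ISP's equilibrium surplus V(n) = r + n·c − (n+1)·β^N(n)·r is eventually strictly decreasing in n (i.e., there exists N such that V(n+1) < V(n) for all n ≥ N), and V(n) → 0 as n → ∞. -/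
/-- `log x ≥ 1 - 1/x` for `x > 0`. -/
lemma aux_log_ge {x : ℝ} (hx : 0 < x) : 1 - 1 / x ≤ Real.log x := by
  have h := Real.log_le_sub_one_of_pos (show (0:ℝ) < 1 / x by positivity)
  rw [Real.log_div one_ne_zero hx.ne', Real.log_one] at h
  linarith

/-- `u ≤ (1+u) log(1+u)` for `u ≥ 0`. -/
lemma aux_psi_lb {u : ℝ} (hu : 0 ≤ u) : u ≤ (1 + u) * Real.log (1 + u) := by
  have h1u : (0:ℝ) < 1 + u := by linarith
  have h := aux_log_ge h1u
  have h2 : (1 + u) * (1 - 1 / (1 + u)) ≤ (1 + u) * Real.log (1 + u) :=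
    mul_le_mul_of_nonneg_left h (le_of_lt h1u)
  have h3 : (1 + u) * (1 - 1 / (1 + u)) = u := by field_simp; ring
  linarith

/-- `(1+u) log(1+u) ≤ u + u²/2` for `u ≥ 0`. -/
lemma aux_psi_ub {u : ℝ} (hu : 0 ≤ u) : (1 + u) * Real.log (1 + u) ≤ u + u ^ 2 / 2 := by
  have h1u : (0:ℝ) < 1 + u := by linarith
  have hl0 : 0 ≤ Real.log (1 + u) := Real.log_nonneg (by linarith)
  have hs : Real.log (1 + u) ≤ Real.sinh (Real.log (1 + u)) :=
    Real.self_le_sinh_iff.mpr hl0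
  rw [Real.sinh_eq, Real.exp_log h1u, Real.exp_neg, Real.exp_log h1u] at hs
  have h2 : (1 + u) * Real.log (1 + u) ≤ (1 + u) * (((1 + u) - (1 + u)⁻¹) / 2) :=
    mul_le_mul_of_nonneg_left hs (le_of_lt h1u)
  have h3 : (1 + u) * (((1 + u) - (1 + u)⁻¹) / 2) = u + u ^ 2 / 2 := by
    field_simp
    ring
  linarith

/-- Convexity-style inequality for `ψ(t) = (1+t) log (1+t)`. -/
lemma aux_conv {x y : ℝ} (hx : -1 < x) (hy : -1 < y) :
    (y - x) * (1 + Real.log (1 + x)) ≤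
      (1 + y) * Real.log (1 + y) - (1 + x) * Real.log (1 + x) := by
  have hX : (0:ℝ) < 1 + x := by linarith
  have hY : (0:ℝ) < 1 + y := by linarith
  have h := Real.log_le_sub_one_of_pos (show (0:ℝ) < (1 + x) / (1 + y) by positivity)
  rw [Real.log_div hX.ne' hY.ne'] at h
  -- h : log(1+x) - log(1+y) ≤ (1+x)/(1+y) - 1
  have h2 : (1 + y) * (Real.log (1 + y) - Real.log (1 + x)) ≥ (y - x) := by
    have h3 : (1 + y) * ((1 + x) / (1 + y) - 1) = x - y := by field_simp; ring
    nlinarith [mul_le_mul_of_nonneg_left h (le_of_lt hY)]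
  nlinarith [h2]

set_option maxHeartbeats 2000000 in
/-- The ISP's neutral-regime equilibrium surplus `V(n) = r + n c - (n+1) β^N(n) r` is
eventually strictly decreasing in `n`, and tends to `0` as `n → ∞`. -/
theorem stmt_14 (r c : ℝ) (hc : 0 < c) (hrc : c < r) (β : ℕ → ℝ)
    (hmem : ∀ n : ℕ, 1 ≤ n → β n ∈ Set.Ioo (0 : ℝ) 1)
    (heq : ∀ n : ℕ, 1 ≤ n → (n : ℝ) * β n * Real.log (β n * r / c) = 1 - β n) :
    (∃ N : ℕ, ∀ n : ℕ, N ≤ n →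
      r + ((n : ℝ) + 1) * c - (((n : ℝ) + 1) + 1) * β (n + 1) * r <
        r + (n : ℝ) * c - ((n : ℝ) + 1) * β n * r) ∧
    Filter.Tendsto (fun n : ℕ => r + (n : ℝ) * c - ((n : ℝ) + 1) * β n * r)
      Filter.atTop (nhds 0) := by
  have hr : 0 < r := lt_trans hc hrc
  obtain ⟨a, ha_def⟩ : ∃ a : ℝ, a = r / c - 1 := ⟨_, rfl⟩
  have ha : 0 < a := by
    have : 1 < r / c := (one_lt_div hc).mpr hrc
    rw [ha_def]; linarith
  obtain ⟨u, hu_def⟩ : ∃ u : ℕ → ℝ, ∀ k, u k = β k * r / c - 1 := ⟨_, fun _ => rfl⟩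
  have h1u : ∀ n, β n * r / c = 1 + u n := by
    intro n; rw [hu_def n]; ring
  have hβr : ∀ n, (1 + u n) * c = β n * r := by
    intro n; rw [hu_def n]; field_simp; ring
  have hca : c * a = r - c := by
    rw [ha_def]; field_simp
  -- positivity of u
  have hu_pos : ∀ n : ℕ, 1 ≤ n → 0 < u n := by
    intro n hn
    obtain ⟨hβ0, hβ1⟩ := hmem n hn
    have h := heq n hn
    have hn' : (0:ℝ) < (n:ℝ) := by exact_mod_cast hn
    have hx : 0 < β n * r / c := by positivity
    have hnb : 0 < (n:ℝ) * β n := by positivity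
    have hL : 0 < Real.log (β n * r / c) := by
      by_contra h'
      push_neg at h'
      nlinarith
    have : 1 < β n * r / c := (Real.log_pos_iff hx.le).mp hL
    rw [hu_def n]; linarith
  -- the transformed equation
  have hE : ∀ n : ℕ, 1 ≤ n →
      (n:ℝ) * ((1 + u n) * Real.log (1 + u n)) = a - u n := by
    intro n hn
    have h := heq n hn
    rw [h1u n] at h
    have h2 : (n:ℝ) * ((1 + u n) * c) * Real.log (1 + u n) = r - (1 + u n) * c := by
      linear_combination r * h + ((n:ℝ) * Real.log (1 + u n) + 1) * (hβr n)
    have hc' : c ≠ 0 := hc.ne'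
    rw [ha_def, eq_sub_iff_add_eq, eq_sub_iff_add_eq, eq_div_iff hc']
    linear_combination h2
  -- upper bound on u
  have hub : ∀ n : ℕ, 1 ≤ n → ((n:ℝ) + 1) * u n ≤ a := by
    intro n hn
    have hE' := hE n hn
    have hn0 : (0:ℝ) ≤ (n:ℝ) := Nat.cast_nonneg n
    have h := mul_le_mul_of_nonneg_left (aux_psi_lb (le_of_lt (hu_pos n hn))) hn0
    nlinarith [hE', h]
  -- value formula
  have hV : ∀ n : ℕ, r + (n:ℝ) * c - ((n:ℝ) + 1) * β n * r
      = c * (a - ((n:ℝ) + 1) * u n) := by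
    intro n
    linear_combination ((n:ℝ) + 1) * (hβr n) - hca
  -- second-order upper bound: a - (n+1) u n ≤ a^2/(2n)
  have hub2 : ∀ n : ℕ, 1 ≤ n → a - ((n:ℝ) + 1) * u n ≤ a ^ 2 / (2 * (n:ℝ)) := by
    intro n hn
    have hn' : (1:ℝ) ≤ (n:ℝ) := by exact_mod_cast hn
    have hn0 : (0:ℝ) ≤ (n:ℝ) := by linarith
    have hnpos : (0:ℝ) < (n:ℝ) := by linarith
    have hupos := hu_pos n hn
    have hE' := hE n hn
    have h1 := mul_le_mul_of_nonneg_left (aux_psi_ub (le_of_lt hupos)) hn0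
    have h2 : a - ((n:ℝ) + 1) * u n ≤ (n:ℝ) * (u n) ^ 2 / 2 := by nlinarith [hE', h1]
    have hub' := hub n hn
    have h3a : (0:ℝ) ≤ (n:ℝ) * u n := by positivity
    have h3b : (n:ℝ) * u n ≤ a := by nlinarith [hub', hupos]
    have h3 : ((n:ℝ) * u n) ^ 2 ≤ a ^ 2 := by nlinarith [h3a, h3b]
    rw [le_div_iff₀ (show (0:ℝ) < 2 * (n:ℝ) by positivity)]
    nlinarith [h2, h3, mul_le_mul_of_nonneg_right h2 (show (0:ℝ) ≤ 2 * (n:ℝ) by positivity)]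
  constructor
  · -- eventual strict decrease
    refine ⟨max 3 ⌈2 * a⌉₊, fun n hn => ?_⟩
    have hn3 : 3 ≤ n := le_trans (le_max_left _ _) hn
    have hn1 : 1 ≤ n := by omega
    have hn1' : 1 ≤ n + 1 := by omega
    have hn3' : (3:ℝ) ≤ (n:ℝ) := by exact_mod_cast hn3
    have hNa : 2 * a ≤ (n:ℝ) := by
      have : ⌈2 * a⌉₊ ≤ n := le_trans (le_max_right _ _) hn
      exact_mod_cast Nat.ceil_le.mp this
    have hU : 0 < u n := hu_pos n hn1
    have hU' : 0 < u (n + 1) := hu_pos (n + 1) hn1'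
    have hL'pos : 0 < Real.log (1 + u (n + 1)) := Real.log_pos (by linarith)
    have e1 : (n:ℝ) * ((1 + u n) * Real.log (1 + u n)) = a - u n := hE n hn1
    have e2 : ((n:ℝ) + 1) * ((1 + u (n + 1)) * Real.log (1 + u (n + 1))) = a - u (n + 1) := by
      have := hE (n + 1) hn1'
      push_cast at this
      exact this
    have hub' : ((n:ℝ) + 1 + 1) * u (n + 1) ≤ a := by
      have := hub (n + 1) hn1'
      push_cast at this
      linarith
    have hhalf : u (n + 1) < 1 / 2 := by
      by_contra h'
      push_neg at h'
      have := mul_le_mul_of_nonneg_left h' (show (0:ℝ) ≤ (n:ℝ) + 1 + 1 by linarith)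
      nlinarith [hub', hNa]
    -- convexity step
    have hconv := aux_conv (show (-1:ℝ) < u (n + 1) by linarith)
      (show (-1:ℝ) < u n by linarith)
    have hn0 : (0:ℝ) ≤ (n:ℝ) := Nat.cast_nonneg n
    have h5 := mul_le_mul_of_nonneg_left hconv hn0
    have h6 : (n:ℝ) * ((1 + u n) * Real.log (1 + u n)
          - (1 + u (n + 1)) * Real.log (1 + u (n + 1)))
        = u (n + 1) - u n + (1 + u (n + 1)) * Real.log (1 + u (n + 1)) := by
      linear_combination e1 - e2
    have hd : (u n - u (n + 1)) * ((n:ℝ) * (1 + Real.log (1 + u (n + 1))) + 1)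
        ≤ (1 + u (n + 1)) * Real.log (1 + u (n + 1)) := by linarith [h5, h6]
    -- key inequality:  (n+1)·ψ(u') < u'·(n(1+L')+1)
    have hA : (1 + u (n + 1)) * Real.log (1 + u (n + 1)) ≤ u (n + 1) + u (n + 1) ^ 2 / 2 :=
      aux_psi_ub (le_of_lt hU')
    have hlb : u (n + 1) ≤ (1 + u (n + 1)) * Real.log (1 + u (n + 1)) :=
      aux_psi_lb (le_of_lt hU')
    have hL3 : 2 / 3 * u (n + 1) < Real.log (1 + u (n + 1)) := by
      linarith [hlb, mul_lt_mul_of_pos_right hhalf hL'pos]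
    have hUL2 : (2 / 3) * u (n + 1) ^ 2 < u (n + 1) * Real.log (1 + u (n + 1)) := by
      have := mul_lt_mul_of_pos_left hL3 hU'
      nlinarith [this]
    have hstep : u (n + 1) * Real.log (1 + u (n + 1)) - u (n + 1) ^ 2 / 2
        ≤ u (n + 1) - Real.log (1 + u (n + 1)) := by linarith [hA]
    have hstep2 := mul_le_mul_of_nonneg_left hstep (show (0:ℝ) ≤ (n:ℝ) + 1 by linarith)
    have hm1 : (n:ℝ) * ((2 / 3) * u (n + 1) ^ 2)
        < (n:ℝ) * (u (n + 1) * Real.log (1 + u (n + 1))) :=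
      mul_lt_mul_of_pos_left hUL2 (by linarith)
    have hm2 : 0 ≤ ((n:ℝ) - 3) * u (n + 1) ^ 2 :=
      mul_nonneg (by linarith) (sq_nonneg _)
    have hgoal : u (n + 1) * Real.log (1 + u (n + 1))
        < ((n:ℝ) + 1) * (u (n + 1) - Real.log (1 + u (n + 1))) := by
      linarith [hstep2, hm1, hm2]
    have hkey : ((n:ℝ) + 1) * ((1 + u (n + 1)) * Real.log (1 + u (n + 1)))
        < u (n + 1) * ((n:ℝ) * (1 + Real.log (1 + u (n + 1))) + 1) := by
      nlinarith [hgoal]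
    have hP : (0:ℝ) < (n:ℝ) * (1 + Real.log (1 + u (n + 1))) + 1 := by positivity
    have h8' := mul_le_mul_of_nonneg_left hd (show (0:ℝ) ≤ (n:ℝ) + 1 by linarith)
    have h9 : (((n:ℝ) + 1) * (u n - u (n + 1)))
          * ((n:ℝ) * (1 + Real.log (1 + u (n + 1))) + 1)
        < u (n + 1) * ((n:ℝ) * (1 + Real.log (1 + u (n + 1))) + 1) := by
      nlinarith [h8', hkey]
    have h10 : ((n:ℝ) + 1) * (u n - u (n + 1)) < u (n + 1) :=
      lt_of_mul_lt_mul_right h9 (le_of_lt hP)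
    -- conclude
    have hVn := hV n
    have hVn1 := hV (n + 1)
    push_cast at hVn1
    rw [hVn, hVn1]
    have h11 : a - ((n:ℝ) + 1 + 1) * u (n + 1) < a - ((n:ℝ) + 1) * u n := by
      nlinarith [h10]
    exact mul_lt_mul_of_pos_left h11 hc
  · -- tendsto 0
    apply squeeze_zero' (g := fun n : ℕ => (c * a ^ 2 / 2) / (n:ℝ))
    · filter_upwards [Filter.eventually_atTop.mpr ⟨1, fun n hn => hn⟩] with n hn
      rw [hV n]
      have h1 := hub n hn
      have h2 : 0 ≤ a - ((n:ℝ) + 1) * u n := by linarith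
      positivity
    · filter_upwards [Filter.eventually_atTop.mpr ⟨1, fun n hn => hn⟩] with n hn
      rw [hV n]
      have h2 := hub2 n hn
      have hn' : (1:ℝ) ≤ (n:ℝ) := by exact_mod_cast hn
      have hnpos : (0:ℝ) < (n:ℝ) := by linarith
      have h3 : c * (a - ((n:ℝ) + 1) * u n) ≤ c * (a ^ 2 / (2 * (n:ℝ))) :=
        mul_le_mul_of_nonneg_left h2 (le_of_lt hc)
      have h4 : c * (a ^ 2 / (2 * (n:ℝ))) = (c * a ^ 2 / 2) / (n:ℝ) := by
        field_simp
      linarith [h3, h4.le, h4.ge]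
    · exact tendsto_const_div_atTop_nhds_zero_nat (c * a ^ 2 / 2)
end

section
/- Let c > 0 and r_1 > r_2 > 0 with r_1 ≤ 2c. Then the profile (β_1, β_2) = (0, 0) is a Nash equilibrium of the two-CP asymmetric neutral game: neither CP can obtain strictly positive payoff by unilaterally deviating. -/
/-!
Since `r₂ < r₁ ≤ 2c`, a lone deviating CP with share `β ≤ 1` has `β r ≤ r ≤ 2c`, so the ISP's
best-response effort `max (β r / (2c) - 1) 0` stays zero and the deviator's payoff is zero,
exactly its payoff at `(0, 0)`.
-/

theorem log_max_one_eq_zero {x : ℝ} (hx : x ≤ 1) : Real.log (max x 1) = 0 := by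
  rw [max_eq_right hx, Real.log_one]

theorem mul_div_le_one_of_mem_Icc {b r d : ℝ} (hb : b ∈ Set.Icc (0 : ℝ) 1) (hr : 0 ≤ r)
    (hrd : r ≤ d) : b * r / d ≤ 1 :=
  div_le_one_of_le₀ ((mul_le_of_le_one_left hr hb.2).trans hrd) (hr.trans hrd)

theorem payoff_eq_zero_of_le {b r d : ℝ} (hb : b ∈ Set.Icc (0 : ℝ) 1) (hr : 0 ≤ r)
    (hrd : r ≤ d) : (1 - b) * r * Real.log (max (b * r / d) 1) = 0 := by
  rw [log_max_one_eq_zero (mul_div_le_one_of_mem_Icc hb hr hrd), mul_zero]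

theorem stmt_16_general (c r1 r2 : ℝ) (hr2 : 0 < r2) (hr12 : r2 < r1)
    (h2c : r1 ≤ 2 * c) :
    (∀ b ∈ Set.Icc (0 : ℝ) 1,
      (1 - b) * r1 * Real.log (max ((b * r1 + 0 * r2) / (2 * c)) 1) ≤
        (1 - (0 : ℝ)) * r1 * Real.log (max (((0 : ℝ) * r1 + 0 * r2) / (2 * c)) 1)) ∧
    (∀ b ∈ Set.Icc (0 : ℝ) 1,
      (1 - b) * r2 * Real.log (max (((0 : ℝ) * r1 + b * r2) / (2 * c)) 1) ≤
        (1 - (0 : ℝ)) * r2 * Real.log (max (((0 : ℝ) * r1 + 0 * r2) / (2 * c)) 1)) := by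
  have hr1 : 0 ≤ r1 := hr2.le.trans hr12.le
  refine ⟨fun b hb => ?_, fun b hb => ?_⟩ <;> simp only [zero_mul, add_zero, zero_add]
  · rw [payoff_eq_zero_of_le hb hr1 h2c]
    simp
  · rw [payoff_eq_zero_of_le hb hr2.le (hr12.le.trans h2c)]
    simp

/-- In the two-CP asymmetric neutral game with `r_1 > r_2 > 0`, `c > 0` and `r_1 ≤ 2c`,
the profile `(0, 0)` is a Nash equilibrium. -/
theorem stmt_16 (c r1 r2 : ℝ) (hc : 0 < c) (hr2 : 0 < r2) (hr12 : r2 < r1)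
    (h2c : r1 ≤ 2 * c) :
    (∀ b ∈ Set.Icc (0 : ℝ) 1,
      (1 - b) * r1 * Real.log (max ((b * r1 + 0 * r2) / (2 * c)) 1) ≤
        (1 - (0 : ℝ)) * r1 * Real.log (max (((0 : ℝ) * r1 + 0 * r2) / (2 * c)) 1)) ∧
    (∀ b ∈ Set.Icc (0 : ℝ) 1,
      (1 - b) * r2 * Real.log (max (((0 : ℝ) * r1 + b * r2) / (2 * c)) 1) ≤
        (1 - (0 : ℝ)) * r2 * Real.log (max (((0 : ℝ) * r1 + 0 * r2) / (2 * c)) 1)) :=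
  stmt_16_general c r1 r2 hr2 hr12 h2c
end

section
/- Let c > 0 and r_1 > r_2 > 0 with r_1 > 2c, and let w > 0 satisfy w·exp(w) = (r_1+r_2)·√e/(4c). Suppose (r_1+r_2)/(r_1−r_2) > 2w. Define β̄_1 = (r_1+r_2)/(4·r_1·w) + (r_1−r_2)/(2·r_1) and β̄_2 = (r_1+r_2)/(4·r_2·w) − (r_1−r_2)/(2·r_2). Then β̄_1, β̄_2 ∈ [0,1] and (β̄_1, β̄_2) is a Nash equilibrium of the two-CP asymmetric neutral game. -/
/-!
With `T = 2c·exp (w - 1/2)`, the Lambert-W equation says exactly `r₁ + r₂ = 2wT`, and the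
shares `β̄₁, β̄₂` are chosen so that the total `β̄₁r₁ + β̄₂r₂` equals `T` while both CPs keep
`(1 - β̄ᵢ)rᵢ = (w - 1/2)T = T·log (T/2c)`, the first-order condition of their payoffs.
Writing the total as `x`, CP `i`'s payoff is `(s - x)·log⁺(x/2c)` for a constant `s`, and
the bound `log (x/2c) ≤ log (T/2c) + x/T - 1` turns it into `T(L² - (x/T - 1)²) ≤ TL²`
with `L = log (T/2c)`, so no unilateral deviation pays.
-/

open Real

lemma sub_mul_log_max_le_of_eq {k x y s : ℝ} (hk : 0 < k) (hky : k ≤ y) (hxs : x ≤ s)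
    (hfoc : s - y = y * log (y / k)) :
    (s - x) * log (max (x / k) 1) ≤ (s - y) * log (y / k) := by
  have hy : 0 < y := hk.trans_le hky
  have hL : 0 ≤ log (y / k) := log_nonneg ((one_le_div hk).2 hky)
  have hrhs : (s - y) * log (y / k) = y * log (y / k) ^ 2 := by rw [hfoc]; ring
  rcases le_or_gt (x / k) 1 with hx | hx
  · rw [max_eq_right hx, log_one, mul_zero, hrhs]
    positivity
  · have hx0 : 0 < x := by have := (one_lt_div hk).1 hx; linarith
    have hlog : log (x / k) ≤ log (y / k) + (x / y - 1) := by
      have := log_le_sub_one_of_pos (div_pos hx0 hy)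
      rw [log_div hx0.ne' hy.ne'] at this
      rw [log_div hx0.ne' hk.ne', log_div hy.ne' hk.ne']
      linarith
    have hs : s = y + y * log (y / k) := by linarith
    -- `s - x = y (L - (x/y - 1))`, so the bound is a difference of squares
    calc (s - x) * log (max (x / k) 1)
        ≤ (s - x) * (log (y / k) + (x / y - 1)) := by
          rw [max_eq_left hx.le]
          exact mul_le_mul_of_nonneg_left hlog (by linarith)
      _ = y * (log (y / k) ^ 2 - (x / y - 1) ^ 2) := by
          rw [hs]; field_simp; ring
      _ ≤ (s - y) * log (y / k) := by
          rw [hrhs]; nlinarith [sq_nonneg (x / y - 1)]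

lemma neutral_payoff_le_of_foc {k α κ y b b₀ : ℝ} (hk : 0 < k) (hα : 0 ≤ α) (hb : b ≤ 1)
    (hy : b₀ * α + κ = y) (hky : k ≤ y) (hfoc : (1 - b₀) * α = y * log (y / k)) :
    (1 - b) * α * log (max ((b * α + κ) / k) 1) ≤
      (1 - b₀) * α * log (max ((b₀ * α + κ) / k) 1) := by
  have hyk : max (y / k) 1 = y / k := max_eq_left ((one_le_div hk).2 hky)
  have key := sub_mul_log_max_le_of_eq (s := α + κ) hk hky
    (by nlinarith : b * α + κ ≤ α + κ) (by linarith)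
  rw [hy, hyk]
  convert key using 2 <;> linarith

lemma half_lt_of_exp_half_div_two_lt {w : ℝ} (h : exp (1 / 2) / 2 < w * exp w) : 1 / 2 < w := by
  by_contra! hw
  have : w * exp w ≤ 1 / 2 * exp (1 / 2) :=
    mul_le_mul hw (exp_le_exp.2 hw) (exp_pos w).le (by norm_num)
  linarith

/-- Interior equilibrium of the two-CP asymmetric neutral game: with `r_1 > r_2 > 0`,
`c > 0`, `r_1 > 2c`, Lambert-W value `w` of `(r_1+r_2)√e/(4c)` and
`(r_1+r_2)/(r_1-r_2) > 2w`, the pair `(β̄_1, β̄_2)` lies in `[0,1]²` and is a Nash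
equilibrium. -/
theorem stmt_17 (c r1 r2 : ℝ) (hc : 0 < c) (hr2 : 0 < r2) (hr12 : r2 < r1)
    (h2c : 2 * c < r1) (w : ℝ) (hw : 0 < w)
    (hwW : w * Real.exp w = (r1 + r2) * Real.sqrt (Real.exp 1) / (4 * c))
    (hcond : 2 * w < (r1 + r2) / (r1 - r2)) :
    (r1 + r2) / (4 * r1 * w) + (r1 - r2) / (2 * r1) ∈ Set.Icc (0 : ℝ) 1 ∧
    (r1 + r2) / (4 * r2 * w) - (r1 - r2) / (2 * r2) ∈ Set.Icc (0 : ℝ) 1 ∧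
    (∀ b ∈ Set.Icc (0 : ℝ) 1,
      (1 - b) * r1 *
          Real.log (max ((b * r1 +
            ((r1 + r2) / (4 * r2 * w) - (r1 - r2) / (2 * r2)) * r2) / (2 * c)) 1) ≤
        (1 - ((r1 + r2) / (4 * r1 * w) + (r1 - r2) / (2 * r1))) * r1 *
          Real.log (max ((((r1 + r2) / (4 * r1 * w) + (r1 - r2) / (2 * r1)) * r1 +
            ((r1 + r2) / (4 * r2 * w) - (r1 - r2) / (2 * r2)) * r2) / (2 * c)) 1)) ∧
    (∀ b ∈ Set.Icc (0 : ℝ) 1,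
      (1 - b) * r2 *
          Real.log (max ((((r1 + r2) / (4 * r1 * w) + (r1 - r2) / (2 * r1)) * r1 +
            b * r2) / (2 * c)) 1) ≤
        (1 - ((r1 + r2) / (4 * r2 * w) - (r1 - r2) / (2 * r2))) * r2 *
          Real.log (max ((((r1 + r2) / (4 * r1 * w) + (r1 - r2) / (2 * r1)) * r1 +
            ((r1 + r2) / (4 * r2 * w) - (r1 - r2) / (2 * r2)) * r2) / (2 * c)) 1)) := by
  have hr1 : 0 < r1 := hr2.trans hr12
  rw [← exp_half] at hwW
  have hw_half : 1 / 2 < w := half_lt_of_exp_half_div_two_lt <| by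
    rw [hwW, lt_div_iff₀ (by positivity)]
    nlinarith [exp_pos (1 / 2 : ℝ)]
  set β₁ := (r1 + r2) / (4 * r1 * w) + (r1 - r2) / (2 * r1)
  set β₂ := (r1 + r2) / (4 * r2 * w) - (r1 - r2) / (2 * r2)
  set T := 2 * c * exp (w - 1 / 2) with hT
  have hlogT : log (T / (2 * c)) = w - 1 / 2 := by
    rw [hT, mul_div_cancel_left₀ _ (by positivity), log_exp]
  have h2cT : 2 * c ≤ T := le_mul_of_one_le_right (by positivity) (one_le_exp (by linarith))
  have hsum_r : r1 + r2 = 2 * w * T := by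
    rw [hT, exp_sub]; field_simp at hwW ⊢; linarith
  have hsum : β₁ * r1 + β₂ * r2 = T := by
    simp only [β₁, β₂]; field_simp; linarith
  have hfoc₁ : (1 - β₁) * r1 = T * log (T / (2 * c)) := by
    rw [hlogT]; simp only [β₁]; field_simp; linear_combination (4 * w - 2) * hsum_r
  have hfoc₂ : (1 - β₂) * r2 = T * log (T / (2 * c)) := by
    rw [hlogT]; simp only [β₂]; field_simp; linear_combination (4 * w - 2) * hsum_r
  have hfoc_nonneg : 0 ≤ T * log (T / (2 * c)) := by rw [hlogT]; nlinarith
  refine ⟨⟨by positivity, ?_⟩, ⟨?_, ?_⟩, fun b hb => ?_, fun b hb => ?_⟩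
  · nlinarith
  · have hβ₂ : β₂ = (r1 + r2 - 2 * w * (r1 - r2)) / (4 * r2 * w) := by
      simp only [β₂]; field_simp; ring
    have := (lt_div_iff₀ (sub_pos.2 hr12)).1 hcond
    rw [hβ₂]
    exact div_nonneg (by linarith) (by positivity)
  · nlinarith
  · exact neutral_payoff_le_of_foc (by positivity) hr1.le hb.2 hsum h2cT hfoc₁
  · rw [add_comm (β₁ * r1) (b * r2), add_comm (β₁ * r1) (β₂ * r2)]
    exact neutral_payoff_le_of_foc (by positivity) hr2.le hb.2 (by rwa [add_comm]) h2cT hfoc₂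
end

section
/- Let c > 0. For each r > 2c, let β^N(r) be the unique β ∈ (0,1) with β·log(β·r/(2c)) = 1 − β, and let β^NN(r) be the unique β ∈ (0,1) with β·log(β·r/c) = 1 − β. Then: (i) β^N(r) > β^NN(r) for every r > 2c; (ii) the map r ↦ β^N(r) is strictly decreasing on (2c, ∞); and (iii) it follows that the dominant CP's surplus is strictly lower in the neutral regime: (1−β^N(r))²·r/β^N(r) < (1−β^NN(r))²·r/β^NN(r). -/
/-!
Writing the defining equation `β log (β k) = 1 - β` as `(1 - β)/β - log β = log k` separates the
share `β` from the revenue ratio `k`. The left side is strictly decreasing in `β > 0`, so the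
share is strictly decreasing in `k`. The neutral ratio `r/(2c)` is smaller than the non-neutral
ratio `r/c` and grows with `r`, which gives (i) and (ii). For (iii), the surplus
`(1 - β)² r / β` is strictly decreasing in `β` on `(0, 1]`.
-/

open Real Set

noncomputable def shareIndex (β : ℝ) : ℝ := (1 - β) / β - log β

lemma strictAntiOn_shareIndex : StrictAntiOn shareIndex (Ioi 0) := by
  intro a (ha : 0 < a) b (hb : 0 < b) hab
  have hfrac : (1 - b) / b < (1 - a) / a := by
    rw [div_lt_div_iff₀ hb ha]; nlinarith
  have hlog : log a < log b := log_lt_log ha hab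
  unfold shareIndex
  linarith

lemma shareIndex_eq_log_of_mul_log_eq {β k : ℝ} (hβ : 0 < β) (hk : 0 < k)
    (h : β * log (β * k) = 1 - β) : shareIndex β = log k := by
  have hlog : log (β * k) = (1 - β) / β := by
    rw [eq_div_iff hβ.ne']; linarith
  rw [log_mul hβ.ne' hk.ne'] at hlog
  unfold shareIndex
  linarith

lemma lt_of_mul_log_eq_of_lt {β₁ β₂ k₁ k₂ : ℝ} (hβ₁ : 0 < β₁) (hβ₂ : 0 < β₂)
    (hk₁ : 0 < k₁) (hk : k₁ < k₂)
    (h₁ : β₁ * log (β₁ * k₁) = 1 - β₁) (h₂ : β₂ * log (β₂ * k₂) = 1 - β₂) : β₂ < β₁ := by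
  have hindex : shareIndex β₁ < shareIndex β₂ := by
    rw [shareIndex_eq_log_of_mul_log_eq hβ₁ hk₁ h₁,
      shareIndex_eq_log_of_mul_log_eq hβ₂ (hk₁.trans hk) h₂]
    exact log_lt_log hk₁ hk
  exact (strictAntiOn_shareIndex.lt_iff_gt hβ₁ hβ₂).mp hindex

lemma strictAntiOn_one_sub_sq_div : StrictAntiOn (fun β : ℝ ↦ (1 - β) ^ 2 / β) (Ioc 0 1) := by
  intro a ⟨ha, ha₁⟩ b ⟨hb, hb₁⟩ hab
  rw [div_lt_div_iff₀ hb ha]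
  nlinarith [mul_pos (sub_pos.2 hab) (sub_pos.2 (show a * b < 1 by nlinarith))]

/-- For `c > 0` and `r > 2c`: (i) the neutral dominant-CP share `β^N(r)` exceeds the
non-neutral share `β^NN(r)`; (ii) `β^N` is strictly decreasing on `(2c, ∞)`; and (iii)
the dominant CP's surplus is strictly lower in the neutral regime. -/
theorem stmt_19 (c : ℝ) (hc : 0 < c) (βN βNN : ℝ → ℝ)
    (hmemN : ∀ r, 2 * c < r → βN r ∈ Set.Ioo (0 : ℝ) 1)
    (heqN : ∀ r, 2 * c < r → βN r * Real.log (βN r * r / (2 * c)) = 1 - βN r)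
    (hmemNN : ∀ r, 2 * c < r → βNN r ∈ Set.Ioo (0 : ℝ) 1)
    (heqNN : ∀ r, 2 * c < r → βNN r * Real.log (βNN r * r / c) = 1 - βNN r) :
    (∀ r, 2 * c < r → βNN r < βN r) ∧
    (∀ r s, 2 * c < r → r < s → βN s < βN r) ∧
    (∀ r, 2 * c < r →
      (1 - βN r) ^ 2 * r / βN r < (1 - βNN r) ^ 2 * r / βNN r) := by
  have heqN' : ∀ r, 2 * c < r → βN r * log (βN r * (r / (2 * c))) = 1 - βN r := fun r hr ↦ by
    rw [← mul_div_assoc]; exact heqN r hr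
  have heqNN' : ∀ r, 2 * c < r → βNN r * log (βNN r * (r / c)) = 1 - βNN r := fun r hr ↦ by
    rw [← mul_div_assoc]; exact heqNN r hr
  have hshare : ∀ r, 2 * c < r → βNN r < βN r := fun r hr ↦
    lt_of_mul_log_eq_of_lt (hmemN r hr).1 (hmemNN r hr).1 (div_pos (by linarith) (by linarith))
      (div_lt_div_of_pos_left (by linarith) hc (by linarith)) (heqN' r hr) (heqNN' r hr)
  refine ⟨hshare, fun r s hr hrs ↦ ?_, fun r hr ↦ ?_⟩
  · have hs : 2 * c < s := hr.trans hrs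
    exact lt_of_mul_log_eq_of_lt (hmemN r hr).1 (hmemN s hs).1 (div_pos (by linarith) (by linarith))
      (div_lt_div_of_pos_right hrs (by positivity)) (heqN' r hr) (heqN' s hs)
  · obtain ⟨hN₀, hN₁⟩ := hmemN r hr
    obtain ⟨hNN₀, hNN₁⟩ := hmemNN r hr
    simp only [mul_div_right_comm _ r]
    exact mul_lt_mul_of_pos_right
      (strictAntiOn_one_sub_sq_div ⟨hNN₀, hNN₁.le⟩ ⟨hN₀, hN₁.le⟩ (hshare r hr)) (by linarith)
end
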